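/- arXiv:1903.07249 — 8 statements merged into one kernel-verified Lean document; each statement's English description precedes it below -/
import Mathlib

section
/- Let U be an ultrafilter over I and A a C*-algebra represented faithfully and nondegenerately on B(H). Let A^U = (∏_I A)/N_U be the norm ultrapower of A (bounded families modulo families with lim_U ‖a_i‖ = 0). Then the set A^{sU} of classes in A^U represented by U-strict convergent families is a norm-closed *-subalgebra of A^U, hence a C*-algebra. -/
open Filter
open Filter

/-- `U`-strict convergence of a family of operators to `T` relative to `A ⊆ B(H)`. -/
def UStrictTo {I : Type*} {H : Type*} [NormedAddCommGroup H] [InnerProductSpace ℂ H]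
    [CompleteSpace H]
    (U : Ultrafilter I) (A : Set (H →L[ℂ] H)) (a : I → H →L[ℂ] H) (T : H →L[ℂ] H) : Prop :=
  ∀ x ∈ A, ∀ ε > (0 : ℝ), {i | ‖a i * x - T * x‖ < ε ∧ ‖x * a i - x * T‖ < ε} ∈ U

/-- A nondegenerate action: the span of `{a ξ : a ∈ A, ξ ∈ H}` is dense in `H`. -/
def Nondegenerate {H : Type*} [NormedAddCommGroup H] [InnerProductSpace ℂ H]
    (A : Set (H →L[ℂ] H)) : Prop :=
  Dense (↑(Submodule.span ℂ {ξ : H | ∃ a ∈ A, ∃ η : H, a η = ξ}) : Set H)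

/-- Membership in `A^{sU}`: a bounded family with entries in `A` that is `U`-strict
convergent to some operator. -/
def MemSU {I : Type*} {H : Type*} [NormedAddCommGroup H] [InnerProductSpace ℂ H]
    [CompleteSpace H]
    (U : Ultrafilter I) (A : Set (H →L[ℂ] H)) (a : I → H →L[ℂ] H) : Prop :=
  (∀ i, a i ∈ A) ∧ (∃ M : ℝ, ∀ i, ‖a i‖ ≤ M) ∧ ∃ T : H →L[ℂ] H, UStrictTo U A a T

section Aux

variable {I : Type*} {H : Type*} [NormedAddCommGroup H] [InnerProductSpace ℂ H]
  [CompleteSpace H]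

lemma key_mul {c t ε : ℝ} (hc : 0 ≤ c) (ht0 : 0 ≤ t) (ht : t < ε / (c + 1)) : c * t < ε := by
  have hc1 : (0:ℝ) < c + 1 := by linarith
  have h2 : t * (c + 1) < ε := (lt_div_iff₀ hc1).mp ht
  nlinarith

lemma limit_mul_mem {U : Ultrafilter I} {A : NonUnitalStarSubalgebra ℂ (H →L[ℂ] H)}
    (hA : IsClosed (A : Set (H →L[ℂ] H)))
    {a : I → H →L[ℂ] H} {T : H →L[ℂ] H} (ha : ∀ i, a i ∈ A)
    (h : UStrictTo U (A : Set (H →L[ℂ] H)) a T) {x : H →L[ℂ] H} (hx : x ∈ A) :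
    T * x ∈ A ∧ x * T ∈ A := by
  constructor
  · refine hA.closure_subset ?_
    rw [Metric.mem_closure_iff]
    intro ε hε
    obtain ⟨i, hi⟩ := Filter.nonempty_of_mem (h x hx ε hε)
    exact ⟨a i * x, mul_mem (ha i) hx, by
      rw [dist_eq_norm, norm_sub_rev]; exact hi.1⟩
  · refine hA.closure_subset ?_
    rw [Metric.mem_closure_iff]
    intro ε hε
    obtain ⟨i, hi⟩ := Filter.nonempty_of_mem (h x hx ε hε)
    exact ⟨x * a i, mul_mem hx (ha i), by
      rw [dist_eq_norm, norm_sub_rev]; exact hi.2⟩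

/-- Strict convergence gives convergence on vectors in the span of `A·H`. -/
lemma strict_vec {U : Ultrafilter I} {A : Set (H →L[ℂ] H)}
    {a : I → H →L[ℂ] H} {T : H →L[ℂ] H}
    (h : UStrictTo U A a T) {ζ : H}
    (hζ : ζ ∈ Submodule.span ℂ {ξ : H | ∃ x ∈ A, ∃ η : H, x η = ξ}) :
    ∀ ε > (0:ℝ), {i | ‖a i ζ - T ζ‖ < ε} ∈ U := by
  induction hζ using Submodule.span_induction with
  | mem ξ hξ =>
    intro ε hε
    obtain ⟨x, hx, η, rfl⟩ := hξ
    have h1 := h x hx (ε / (‖η‖ + 1)) (div_pos hε (by positivity))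
    refine Filter.mem_of_superset h1 ?_
    intro i hi
    simp only [Set.mem_setOf_eq] at hi ⊢
    have he : a i (x η) - T (x η) = (a i * x - T * x) η := by
      simp [ContinuousLinearMap.sub_apply, ContinuousLinearMap.mul_apply]
    rw [he]
    calc ‖(a i * x - T * x) η‖ ≤ ‖a i * x - T * x‖ * ‖η‖ :=
          ContinuousLinearMap.le_opNorm _ _
      _ = ‖η‖ * ‖a i * x - T * x‖ := mul_comm _ _
      _ < ε := key_mul (norm_nonneg η) (norm_nonneg _) hi.1
  | zero =>
    intro ε hε
    refine Filter.mem_of_superset Filter.univ_mem ?_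
    intro i _
    simp [hε]
  | add ξ₁ ξ₂ h₁ h₂ ih₁ ih₂ =>
    intro ε hε
    refine Filter.mem_of_superset
      (Filter.inter_mem (ih₁ (ε/2) (by linarith)) (ih₂ (ε/2) (by linarith))) ?_
    rintro i ⟨hi1, hi2⟩
    simp only [Set.mem_setOf_eq] at hi1 hi2 ⊢
    have he : a i (ξ₁ + ξ₂) - T (ξ₁ + ξ₂) = (a i ξ₁ - T ξ₁) + (a i ξ₂ - T ξ₂) := by
      rw [map_add, map_add]; abel
    rw [he]
    calc ‖(a i ξ₁ - T ξ₁) + (a i ξ₂ - T ξ₂)‖ ≤ ‖a i ξ₁ - T ξ₁‖ + ‖a i ξ₂ - T ξ₂‖ :=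
          norm_add_le _ _
      _ < ε := by linarith
  | smul c ξ hξ ih =>
    intro ε hε
    refine Filter.mem_of_superset (ih (ε / (‖c‖ + 1)) (div_pos hε (by positivity))) ?_
    intro i hi
    simp only [Set.mem_setOf_eq] at hi ⊢
    have he : a i (c • ξ) - T (c • ξ) = c • (a i ξ - T ξ) := by
      rw [map_smul, map_smul, smul_sub]
    rw [he, norm_smul]
    exact key_mul (norm_nonneg c) (norm_nonneg _) hi

/-- The Cauchy modulus for the strict limits of an ultrapower-norm convergent
sequence of families. -/
lemma cauchy_mod {U : Ultrafilter I} {A : Set (H →L[ℂ] H)}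
    {f : ℕ → I → H →L[ℂ] H} {a : I → H →L[ℂ] H} {T : ℕ → H →L[ℂ] H}
    (hT : ∀ n, UStrictTo U A (f n) (T n))
    (hconv : ∀ ε > (0:ℝ), ∃ n₀, ∀ n ≥ n₀, {i | ‖f n i - a i‖ < ε} ∈ U)
    {x : H →L[ℂ] H} (hx : x ∈ A) :
    ∀ ε > (0:ℝ), ∃ N, ∀ n ≥ N, ∀ m ≥ N,
      ‖T n * x - T m * x‖ < ε ∧ ‖x * T n - x * T m‖ < ε := by
  intro ε hε
  set δ := ε / (4 * (‖x‖ + 1)) with hδdef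
  have hδ : 0 < δ := by positivity
  obtain ⟨N, hN⟩ := hconv δ hδ
  refine ⟨N, fun n hn m hm => ?_⟩
  have h1 := hT n x hx (ε/4) (by linarith)
  have h2 := hT m x hx (ε/4) (by linarith)
  obtain ⟨i, hi⟩ := Filter.nonempty_of_mem
    (Filter.inter_mem (Filter.inter_mem h1 h2) (Filter.inter_mem (hN n hn) (hN m hm)))
  simp only [Set.mem_inter_iff, Set.mem_setOf_eq] at hi
  obtain ⟨⟨⟨hi1, hi1'⟩, hi2, hi2'⟩, hi3, hi4⟩ := hi
  have hd : ‖f n i - f m i‖ * (‖x‖ + 1) < ε / 2 := by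
    have h5 : ‖f n i - f m i‖ ≤ ‖f n i - a i‖ + ‖f m i - a i‖ := by
      have := norm_sub_le (f n i - a i) (f m i - a i)
      simpa [sub_sub_sub_cancel_right] using this
    have h6 : ‖f n i - f m i‖ < 2 * δ := by linarith
    have h7 : δ * (‖x‖ + 1) = ε / 4 := by
      rw [hδdef]; field_simp
    nlinarith [norm_nonneg (f n i - f m i), norm_nonneg x]
  constructor
  · have he : T n * x - T m * x =
        (T n * x - f n i * x) + ((f n i - f m i) * x) + (f m i * x - T m * x) := by
      noncomm_ring
    rw [he]
    have hb : ‖(f n i - f m i) * x‖ ≤ ‖f n i - f m i‖ * ‖x‖ := norm_mul_le _ _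
    have hb2 : ‖f n i - f m i‖ * ‖x‖ ≤ ‖f n i - f m i‖ * (‖x‖ + 1) :=
      mul_le_mul_of_nonneg_left (by linarith) (norm_nonneg _)
    have t1 : ‖T n * x - f n i * x‖ < ε/4 := by rw [norm_sub_rev]; exact hi1
    have t3 : ‖f m i * x - T m * x‖ < ε/4 := hi2
    calc ‖(T n * x - f n i * x) + ((f n i - f m i) * x) + (f m i * x - T m * x)‖
        ≤ ‖(T n * x - f n i * x) + ((f n i - f m i) * x)‖ + ‖f m i * x - T m * x‖ :=
          norm_add_le _ _
      _ ≤ ‖T n * x - f n i * x‖ + ‖(f n i - f m i) * x‖ + ‖f m i * x - T m * x‖ := by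
          have := norm_add_le (T n * x - f n i * x) ((f n i - f m i) * x)
          linarith
      _ < ε := by linarith
  · have he : x * T n - x * T m =
        (x * T n - x * f n i) + (x * (f n i - f m i)) + (x * f m i - x * T m) := by
      noncomm_ring
    rw [he]
    have hb : ‖x * (f n i - f m i)‖ ≤ ‖x‖ * ‖f n i - f m i‖ := norm_mul_le _ _
    have hb2 : ‖x‖ * ‖f n i - f m i‖ ≤ ‖f n i - f m i‖ * (‖x‖ + 1) := by
      rw [mul_comm]
      exact mul_le_mul_of_nonneg_left (by linarith) (norm_nonneg _)
    have t1 : ‖x * T n - x * f n i‖ < ε/4 := by rw [norm_sub_rev]; exact hi1'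
    have t3 : ‖x * f m i - x * T m‖ < ε/4 := hi2'
    calc ‖(x * T n - x * f n i) + (x * (f n i - f m i)) + (x * f m i - x * T m)‖
        ≤ ‖(x * T n - x * f n i) + (x * (f n i - f m i))‖ + ‖x * f m i - x * T m‖ :=
          norm_add_le _ _
      _ ≤ ‖x * T n - x * f n i‖ + ‖x * (f n i - f m i)‖ + ‖x * f m i - x * T m‖ := by
          have := norm_add_le (x * T n - x * f n i) (x * (f n i - f m i))
          linarith
      _ < ε := by linarith

end Aux

section Closed

variable {I : Type*} {H : Type*} [NormedAddCommGroup H] [InnerProductSpace ℂ H]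
  [CompleteSpace H]

set_option maxHeartbeats 1000000 in
lemma closed_part {U : Ultrafilter I} (A : NonUnitalStarSubalgebra ℂ (H →L[ℂ] H))
    (hnd : Nondegenerate (A : Set (H →L[ℂ] H)))
    (f : ℕ → I → H →L[ℂ] H) (a : I → H →L[ℂ] H)
    (hf : ∀ n, MemSU U (A : Set (H →L[ℂ] H)) (f n))
    (haA : ∀ i, a i ∈ A) (hab : ∃ M : ℝ, ∀ i, ‖a i‖ ≤ M)
    (hconv : ∀ ε > (0:ℝ), ∃ n₀ : ℕ, ∀ n ≥ n₀, {i | ‖f n i - a i‖ < ε} ∈ U) :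
    MemSU U (A : Set (H →L[ℂ] H)) a := by
  obtain ⟨M, hM⟩ := hab
  obtain ⟨i₀, -⟩ := Filter.nonempty_of_mem (Filter.univ_mem (f := (U : Filter I)))
  have hM0 : (0:ℝ) ≤ M := le_trans (norm_nonneg (a i₀)) (hM i₀)
  set C : ℝ := M + 1 with hCdef
  have hC : (0:ℝ) < C := by linarith
  choose T hT using fun n => (hf n).2.2
  obtain ⟨n₁, hn₁⟩ := hconv 1 one_pos
  have hnd' : Dense (↑(Submodule.span ℂ
      {ξ : H | ∃ x ∈ (A : Set (H →L[ℂ] H)), ∃ η : H, x η = ξ}) : Set H) := hnd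
  -- uniform bound on the strict limits
  have hTb : ∀ n ≥ n₁, ∀ ξ : H, ‖T n ξ‖ ≤ C * ‖ξ‖ := by
    intro n hn
    have hspan : ∀ ζ ∈ Submodule.span ℂ
        {ξ : H | ∃ x ∈ (A : Set (H →L[ℂ] H)), ∃ η : H, x η = ξ}, ‖T n ζ‖ ≤ C * ‖ζ‖ := by
      intro ζ hζ
      refine le_of_forall_pos_le_add ?_
      intro ε hε
      obtain ⟨i, hi⟩ := Filter.nonempty_of_mem
        (Filter.inter_mem (strict_vec (hT n) hζ ε hε) (hn₁ n hn))
      simp only [Set.mem_inter_iff, Set.mem_setOf_eq] at hi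
      obtain ⟨hi1, hi2⟩ := hi
      have h1 : ‖f n i‖ ≤ C := by
        have := norm_sub_norm_le (f n i) (a i)
        have := hM i
        simp only [hCdef]
        linarith
      have h2 : ‖f n i ζ‖ ≤ C * ‖ζ‖ :=
        le_trans (ContinuousLinearMap.le_opNorm _ _)
          (mul_le_mul_of_nonneg_right h1 (norm_nonneg ζ))
      have h3 : ‖T n ζ‖ ≤ ‖T n ζ - f n i ζ‖ + ‖f n i ζ‖ := by
        have := norm_add_le (T n ζ - f n i ζ) (f n i ζ)
        simpa using this
      rw [norm_sub_rev] at h3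
      linarith
    have hclosed : IsClosed {ξ : H | ‖T n ξ‖ ≤ C * ‖ξ‖} :=
      isClosed_le (continuous_norm.comp (T n).continuous) (continuous_const.mul continuous_norm)
    intro ξ
    have hsub : closure (↑(Submodule.span ℂ
        {ξ : H | ∃ x ∈ (A : Set (H →L[ℂ] H)), ∃ η : H, x η = ξ}) : Set H)
        ⊆ {ξ : H | ‖T n ξ‖ ≤ C * ‖ξ‖} :=
      hclosed.closure_subset_iff.mpr fun ζ hζ => hspan ζ hζ
    exact hsub (hnd' ξ)
  set g : ℕ → H →L[ℂ] H := fun n => T (n + n₁) with hgdef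
  have hg : ∀ n (ξ : H), ‖g n ξ‖ ≤ C * ‖ξ‖ := fun n => hTb (n + n₁) (Nat.le_add_left _ _)
  -- Cauchy on the span
  have hCs : ∀ ζ ∈ Submodule.span ℂ
      {ξ : H | ∃ x ∈ (A : Set (H →L[ℂ] H)), ∃ η : H, x η = ξ},
      CauchySeq (fun n => g n ζ) := by
    intro ζ hζ
    induction hζ using Submodule.span_induction with
    | mem ξ hξ =>
      obtain ⟨x, hx, η, rfl⟩ := hξ
      rw [Metric.cauchySeq_iff]
      intro ε hε
      obtain ⟨N, hN⟩ := cauchy_mod hT hconv hx (ε / (‖η‖ + 1)) (div_pos hε (by positivity))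
      refine ⟨N, fun m hm n hn => ?_⟩
      have h1 := (hN (m + n₁) (le_trans hm (Nat.le_add_right _ _))
        (n + n₁) (le_trans hn (Nat.le_add_right _ _))).1
      rw [dist_eq_norm]
      have he : g m (x η) - g n (x η) = (T (m + n₁) * x - T (n + n₁) * x) η := by
        simp [hgdef, ContinuousLinearMap.sub_apply, ContinuousLinearMap.mul_apply]
      rw [he]
      calc ‖(T (m + n₁) * x - T (n + n₁) * x) η‖
          ≤ ‖T (m + n₁) * x - T (n + n₁) * x‖ * ‖η‖ := ContinuousLinearMap.le_opNorm _ _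
        _ = ‖η‖ * ‖T (m + n₁) * x - T (n + n₁) * x‖ := mul_comm _ _
        _ < ε := key_mul (norm_nonneg η) (norm_nonneg _) h1
    | zero =>
      have he : (fun n => g n (0:H)) = fun _ => (0:H) := by
        funext n; simp
      rw [he]; exact cauchySeq_const _
    | add ξ₁ ξ₂ h₁ h₂ ih₁ ih₂ =>
      have he : (fun n => g n (ξ₁ + ξ₂)) = fun n => g n ξ₁ + g n ξ₂ := by
        funext n; simp
      rw [he]; exact ih₁.add ih₂
    | smul c ξ hξ ih =>
      have he : (fun n => g n (c • ξ)) = (fun v => c • v) ∘ fun n => g n ξ := by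
        funext n; simp [Function.comp]
      rw [he]
      exact (uniformContinuous_const_smul c).comp_cauchySeq ih
  -- Cauchy everywhere
  have hCa : ∀ ξ : H, CauchySeq (fun n => g n ξ) := by
    intro ξ
    rw [Metric.cauchySeq_iff]
    intro ε hε
    obtain ⟨ζ, hζs, hζd⟩ := Metric.mem_closure_iff.mp (hnd' ξ) (ε / (4 * C)) (by positivity)
    obtain ⟨N, hN⟩ := Metric.cauchySeq_iff.mp (hCs ζ hζs) (ε / 2) (by linarith)
    refine ⟨N, fun m hm n hn => ?_⟩
    have hbd : ∀ k : ℕ, dist (g k ξ) (g k ζ) < ε / 4 := by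
      intro k
      rw [dist_eq_norm, ← map_sub]
      calc ‖g k (ξ - ζ)‖ ≤ C * ‖ξ - ζ‖ := hg k _
        _ < C * (ε / (4 * C)) := by
            apply mul_lt_mul_of_pos_left _ hC
            rwa [← dist_eq_norm]
        _ = ε / 4 := by field_simp
    calc dist (g m ξ) (g n ξ)
        ≤ dist (g m ξ) (g m ζ) + dist (g m ζ) (g n ζ) + dist (g n ζ) (g n ξ) :=
          dist_triangle4 _ _ _ _
      _ < ε / 4 + ε / 2 + ε / 4 := by
          have := hbd m
          have h2 := hN m hm n hn
          have h3 := hbd n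
          rw [dist_comm] at h3
          linarith
      _ = ε := by ring
  -- strong limit
  have hexists : ∀ ξ : H, ∃ L : H, Tendsto (fun n => g n ξ) atTop (nhds L) :=
    fun ξ => cauchySeq_tendsto_of_complete (hCa ξ)
  choose Tf hTf using hexists
  have hadd : ∀ ξ η : H, Tf (ξ + η) = Tf ξ + Tf η := by
    intro ξ η
    refine tendsto_nhds_unique (hTf (ξ + η)) ?_
    have : (fun n => g n (ξ + η)) = fun n => g n ξ + g n η := by funext n; simp
    rw [this]
    exact (hTf ξ).add (hTf η)
  have hsmul : ∀ (c : ℂ) (ξ : H), Tf (c • ξ) = c • Tf ξ := by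
    intro c ξ
    refine tendsto_nhds_unique (hTf (c • ξ)) ?_
    have : (fun n => g n (c • ξ)) = fun n => c • g n ξ := by funext n; simp
    rw [this]
    exact (hTf ξ).const_smul c
  have hbound : ∀ ξ : H, ‖Tf ξ‖ ≤ C * ‖ξ‖ := fun ξ =>
    le_of_tendsto (hTf ξ).norm (Filter.Eventually.of_forall fun n => hg n ξ)
  set Tlin : H →ₗ[ℂ] H :=
    { toFun := Tf
      map_add' := hadd
      map_smul' := hsmul } with hTlin
  set Tt : H →L[ℂ] H := Tlin.mkContinuous C hbound with hTt
  have hTtapp : ∀ ξ : H, Tt ξ = Tf ξ := fun ξ => rfl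
  -- norm convergence of g n * x and x * g n
  have hleft : ∀ x ∈ A, Tendsto (fun n => g n * x) atTop (nhds (Tt * x)) ∧
      Tendsto (fun n => x * g n) atTop (nhds (x * Tt)) := by
    intro x hx
    have hcL : CauchySeq (fun n => g n * x) := by
      rw [Metric.cauchySeq_iff]
      intro ε hε
      obtain ⟨N, hN⟩ := cauchy_mod hT hconv hx ε hε
      refine ⟨N, fun m hm n hn => ?_⟩
      rw [dist_eq_norm]
      exact (hN (m + n₁) (le_trans hm (Nat.le_add_right _ _))
        (n + n₁) (le_trans hn (Nat.le_add_right _ _))).1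
    have hcR : CauchySeq (fun n => x * g n) := by
      rw [Metric.cauchySeq_iff]
      intro ε hε
      obtain ⟨N, hN⟩ := cauchy_mod hT hconv hx ε hε
      refine ⟨N, fun m hm n hn => ?_⟩
      rw [dist_eq_norm]
      exact (hN (m + n₁) (le_trans hm (Nat.le_add_right _ _))
        (n + n₁) (le_trans hn (Nat.le_add_right _ _))).2
    obtain ⟨L, hL⟩ := cauchySeq_tendsto_of_complete hcL
    obtain ⟨R, hR⟩ := cauchySeq_tendsto_of_complete hcR
    have hLe : L = Tt * x := by
      ext η
      have h1 : Tendsto (fun n => (g n * x) η) atTop (nhds (L η)) :=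
        ((ContinuousLinearMap.apply ℂ H η).continuous.tendsto L).comp hL
      have h2 : Tendsto (fun n => (g n * x) η) atTop (nhds (Tf (x η))) := by
        simpa [ContinuousLinearMap.mul_apply] using hTf (x η)
      have := tendsto_nhds_unique h1 h2
      rw [this, ContinuousLinearMap.mul_apply, hTtapp]
    have hRe : R = x * Tt := by
      ext η
      have h1 : Tendsto (fun n => (x * g n) η) atTop (nhds (R η)) :=
        ((ContinuousLinearMap.apply ℂ H η).continuous.tendsto R).comp hR
      have h2 : Tendsto (fun n => (x * g n) η) atTop (nhds (x (Tf η))) := by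
        simp only [ContinuousLinearMap.mul_apply]
        exact (x.continuous.tendsto _).comp (hTf η)
      have := tendsto_nhds_unique h1 h2
      rw [this, ContinuousLinearMap.mul_apply, hTtapp]
    exact ⟨hLe ▸ hL, hRe ▸ hR⟩
  -- conclude strict convergence of a to Tt
  refine ⟨haA, ⟨M, hM⟩, Tt, ?_⟩
  intro x hx ε hε
  set δ : ℝ := ε / (3 * (‖x‖ + 1)) with hδdef
  have hδ : 0 < δ := by positivity
  obtain ⟨hLx, hRx⟩ := hleft x hx
  obtain ⟨N₁, hN₁⟩ := (Metric.tendsto_atTop.mp hLx) (ε/3) (by linarith)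
  obtain ⟨N₂, hN₂⟩ := (Metric.tendsto_atTop.mp hRx) (ε/3) (by linarith)
  obtain ⟨n₂, hn₂⟩ := hconv δ hδ
  set n : ℕ := max (max N₁ N₂) n₂ with hndef
  have hgl : ‖g n * x - Tt * x‖ < ε/3 := by
    have := hN₁ n (le_trans (le_max_left _ _) (le_max_left _ _))
    rwa [dist_eq_norm] at this
  have hgr : ‖x * g n - x * Tt‖ < ε/3 := by
    have := hN₂ n (le_trans (le_max_right _ _) (le_max_left _ _))
    rwa [dist_eq_norm] at this
  have hfs := hT (n + n₁) x hx (ε/3) (by linarith)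
  have hcs := hn₂ (n + n₁) (le_trans (le_max_right _ _) (Nat.le_add_right _ _))
  refine Filter.mem_of_superset (Filter.inter_mem hfs hcs) ?_
  rintro i ⟨hi1, hi2⟩
  simp only [Set.mem_setOf_eq] at hi1 hi2 ⊢
  obtain ⟨hi1l, hi1r⟩ := hi1
  have hsmall : ‖f (n + n₁) i - a i‖ * (‖x‖ + 1) < ε/3 := by
    have h7 : δ * (‖x‖ + 1) = ε / 3 := by rw [hδdef]; field_simp
    calc ‖f (n + n₁) i - a i‖ * (‖x‖ + 1) < δ * (‖x‖ + 1) :=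
          mul_lt_mul_of_pos_right hi2 (by positivity)
      _ = ε/3 := h7
  constructor
  · have he : a i * x - Tt * x =
        ((a i - f (n + n₁) i) * x) + (f (n + n₁) i * x - T (n + n₁) * x)
          + (g n * x - Tt * x) := by
      simp only [hgdef]; noncomm_ring
    rw [he]
    have hb : ‖(a i - f (n + n₁) i) * x‖ < ε/3 := by
      calc ‖(a i - f (n + n₁) i) * x‖ ≤ ‖a i - f (n + n₁) i‖ * ‖x‖ := norm_mul_le _ _
        _ ≤ ‖a i - f (n + n₁) i‖ * (‖x‖ + 1) :=
            mul_le_mul_of_nonneg_left (by linarith) (norm_nonneg _)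
        _ = ‖f (n + n₁) i - a i‖ * (‖x‖ + 1) := by rw [norm_sub_rev]
        _ < ε/3 := hsmall
    calc ‖((a i - f (n + n₁) i) * x) + (f (n + n₁) i * x - T (n + n₁) * x)
          + (g n * x - Tt * x)‖
        ≤ ‖((a i - f (n + n₁) i) * x) + (f (n + n₁) i * x - T (n + n₁) * x)‖
          + ‖g n * x - Tt * x‖ := norm_add_le _ _
      _ ≤ ‖(a i - f (n + n₁) i) * x‖ + ‖f (n + n₁) i * x - T (n + n₁) * x‖
          + ‖g n * x - Tt * x‖ := by
          have := norm_add_le ((a i - f (n + n₁) i) * x)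
            (f (n + n₁) i * x - T (n + n₁) * x)
          linarith
      _ < ε := by linarith
  · have he : x * a i - x * Tt =
        (x * (a i - f (n + n₁) i)) + (x * f (n + n₁) i - x * T (n + n₁))
          + (x * g n - x * Tt) := by
      simp only [hgdef]; noncomm_ring
    rw [he]
    have hb : ‖x * (a i - f (n + n₁) i)‖ < ε/3 := by
      calc ‖x * (a i - f (n + n₁) i)‖ ≤ ‖x‖ * ‖a i - f (n + n₁) i‖ := norm_mul_le _ _
        _ ≤ ‖a i - f (n + n₁) i‖ * (‖x‖ + 1) := by
            rw [mul_comm]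
            exact mul_le_mul_of_nonneg_left (by linarith) (norm_nonneg _)
        _ = ‖f (n + n₁) i - a i‖ * (‖x‖ + 1) := by rw [norm_sub_rev]
        _ < ε/3 := hsmall
    calc ‖(x * (a i - f (n + n₁) i)) + (x * f (n + n₁) i - x * T (n + n₁))
          + (x * g n - x * Tt)‖
        ≤ ‖(x * (a i - f (n + n₁) i)) + (x * f (n + n₁) i - x * T (n + n₁))‖
          + ‖x * g n - x * Tt‖ := norm_add_le _ _
      _ ≤ ‖x * (a i - f (n + n₁) i)‖ + ‖x * f (n + n₁) i - x * T (n + n₁)‖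
          + ‖x * g n - x * Tt‖ := by
          have := norm_add_le (x * (a i - f (n + n₁) i))
            (x * f (n + n₁) i - x * T (n + n₁))
          linarith
      _ < ε := by linarith

end Closed

/-- `A^{sU}` is a norm-closed `*`-subalgebra of the norm ultrapower `A^U`
(stated at the level of representing families): it is closed under addition,
scalar multiplication, adjoints and products, and it is closed in the ultrapower
norm (a family which is the ultrapower-norm limit of a sequence of members of
`A^{sU}` is again `U`-strict convergent). -/
theorem stmt_6 {I : Type*} {H : Type*} [NormedAddCommGroup H]
    [InnerProductSpace ℂ H] [CompleteSpace H]
    (U : Ultrafilter I)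
    (A : NonUnitalStarSubalgebra ℂ (H →L[ℂ] H)) (hA : IsClosed (A : Set (H →L[ℂ] H)))
    (hnd : Nondegenerate (A : Set (H →L[ℂ] H))) :
    (∀ a b : I → H →L[ℂ] H, MemSU U (A : Set (H →L[ℂ] H)) a →
        MemSU U (A : Set (H →L[ℂ] H)) b → MemSU U (A : Set (H →L[ℂ] H)) (fun i => a i + b i))
    ∧ (∀ (c : ℂ) (a : I → H →L[ℂ] H), MemSU U (A : Set (H →L[ℂ] H)) a →
        MemSU U (A : Set (H →L[ℂ] H)) (fun i => c • a i))
    ∧ (∀ a : I → H →L[ℂ] H, MemSU U (A : Set (H →L[ℂ] H)) a →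
        MemSU U (A : Set (H →L[ℂ] H)) (fun i => star (a i)))
    ∧ (∀ a b : I → H →L[ℂ] H, MemSU U (A : Set (H →L[ℂ] H)) a →
        MemSU U (A : Set (H →L[ℂ] H)) b → MemSU U (A : Set (H →L[ℂ] H)) (fun i => a i * b i))
    ∧ (∀ (f : ℕ → I → H →L[ℂ] H) (a : I → H →L[ℂ] H),
        (∀ n, MemSU U (A : Set (H →L[ℂ] H)) (f n)) →
        (∀ i, a i ∈ A) → (∃ M : ℝ, ∀ i, ‖a i‖ ≤ M) →
        (∀ ε > (0 : ℝ), ∃ n₀ : ℕ, ∀ n ≥ n₀, {i | ‖f n i - a i‖ < ε} ∈ U) →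
        MemSU U (A : Set (H →L[ℂ] H)) a) := by
  obtain ⟨i₀, -⟩ := Filter.nonempty_of_mem (Filter.univ_mem (f := (U : Filter I)))
  refine ⟨?_, ?_, ?_, ?_, ?_⟩
  · -- addition
    rintro a b ⟨haA, ⟨Ma, hMa⟩, T, hTs⟩ ⟨hbA, ⟨Mb, hMb⟩, S, hSs⟩
    refine ⟨fun i => add_mem (haA i) (hbA i), ⟨Ma + Mb, fun i => ?_⟩, T + S, ?_⟩
    · exact le_trans (norm_add_le _ _) (add_le_add (hMa i) (hMb i))
    · intro x hx ε hε
      refine Filter.mem_of_superset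
        (Filter.inter_mem (hTs x hx (ε/2) (by linarith)) (hSs x hx (ε/2) (by linarith))) ?_
      rintro i ⟨⟨h1, h2⟩, h3, h4⟩
      simp only [Set.mem_setOf_eq]
      constructor
      · have he : (a i + b i) * x - (T + S) * x = (a i * x - T * x) + (b i * x - S * x) := by
          noncomm_ring
        rw [he]
        calc ‖(a i * x - T * x) + (b i * x - S * x)‖
            ≤ ‖a i * x - T * x‖ + ‖b i * x - S * x‖ := norm_add_le _ _
          _ < ε := by linarith
      · have he : x * (a i + b i) - x * (T + S) = (x * a i - x * T) + (x * b i - x * S) := by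
          noncomm_ring
        rw [he]
        calc ‖(x * a i - x * T) + (x * b i - x * S)‖
            ≤ ‖x * a i - x * T‖ + ‖x * b i - x * S‖ := norm_add_le _ _
          _ < ε := by linarith
  · -- scalar multiplication
    rintro c a ⟨haA, ⟨Ma, hMa⟩, T, hTs⟩
    refine ⟨fun i => SMulMemClass.smul_mem c (haA i), ⟨‖c‖ * Ma, fun i => ?_⟩, c • T, ?_⟩
    · rw [norm_smul]
      exact mul_le_mul_of_nonneg_left (hMa i) (norm_nonneg c)
    · intro x hx ε hε
      refine Filter.mem_of_superset
        (hTs x hx (ε / (‖c‖ + 1)) (div_pos hε (by positivity))) ?_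
      rintro i ⟨h1, h2⟩
      simp only [Set.mem_setOf_eq]
      constructor
      · have he : (c • a i) * x - (c • T) * x = c • (a i * x - T * x) := by
          rw [smul_mul_assoc, smul_mul_assoc, smul_sub]
        rw [he, norm_smul]
        exact key_mul (norm_nonneg c) (norm_nonneg _) h1
      · have he : x * (c • a i) - x * (c • T) = c • (x * a i - x * T) := by
          rw [mul_smul_comm, mul_smul_comm, smul_sub]
        rw [he, norm_smul]
        exact key_mul (norm_nonneg c) (norm_nonneg _) h2
  · -- star
    rintro a ⟨haA, ⟨Ma, hMa⟩, T, hTs⟩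
    refine ⟨fun i => star_mem (haA i), ⟨Ma, fun i => ?_⟩, star T, ?_⟩
    · rw [norm_star]; exact hMa i
    · intro x hx ε hε
      refine Filter.mem_of_superset (hTs (star x) (star_mem hx) ε hε) ?_
      rintro i ⟨h1, h2⟩
      simp only [Set.mem_setOf_eq]
      constructor
      · have he : star (a i) * x - star T * x = star (star x * a i - star x * T) := by
          simp [star_sub, star_mul]
        rw [he, norm_star]
        exact h2
      · have he : x * star (a i) - x * star T = star (a i * star x - T * star x) := by
          simp [star_sub, star_mul]
        rw [he, norm_star]
        exact h1
  · -- product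
    rintro a b ⟨haA, ⟨Ma, hMa⟩, T, hTs⟩ ⟨hbA, ⟨Mb, hMb⟩, S, hSs⟩
    have hMa0 : (0:ℝ) ≤ Ma := le_trans (norm_nonneg (a i₀)) (hMa i₀)
    have hMb0 : (0:ℝ) ≤ Mb := le_trans (norm_nonneg (b i₀)) (hMb i₀)
    refine ⟨fun i => mul_mem (haA i) (hbA i), ⟨Ma * Mb, fun i => ?_⟩, T * S, ?_⟩
    · exact le_trans (norm_mul_le _ _)
        (mul_le_mul (hMa i) (hMb i) (norm_nonneg _) hMa0)
    · intro x hx ε hε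
      have hSx : S * x ∈ A := (limit_mul_mem hA hbA hSs hx).1
      have hxT : x * T ∈ A := (limit_mul_mem hA haA hTs hx).2
      have s₁ := hSs x hx (ε / (2 * (Ma + 1))) (by positivity)
      have s₂ := hTs (S * x) hSx (ε/2) (by linarith)
      have s₃ := hTs x hx (ε / (2 * (Mb + 1))) (by positivity)
      have s₄ := hSs (x * T) hxT (ε/2) (by linarith)
      refine Filter.mem_of_superset
        (Filter.inter_mem (Filter.inter_mem s₁ s₂) (Filter.inter_mem s₃ s₄)) ?_
      rintro i ⟨⟨⟨h1, -⟩, h2, -⟩, ⟨-, h3⟩, -, h4⟩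
      simp only [Set.mem_setOf_eq]
      constructor
      · have he : (a i * b i) * x - (T * S) * x =
            a i * (b i * x - S * x) + (a i * (S * x) - T * (S * x)) := by
          noncomm_ring
        rw [he]
        have hb1 : ‖a i * (b i * x - S * x)‖ < ε/2 := by
          calc ‖a i * (b i * x - S * x)‖ ≤ ‖a i‖ * ‖b i * x - S * x‖ := norm_mul_le _ _
            _ ≤ Ma * ‖b i * x - S * x‖ :=
                mul_le_mul_of_nonneg_right (hMa i) (norm_nonneg _)
            _ < ε/2 := key_mul hMa0 (norm_nonneg _) (by rw [div_div] at *; exact h1)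
        calc ‖a i * (b i * x - S * x) + (a i * (S * x) - T * (S * x))‖
            ≤ ‖a i * (b i * x - S * x)‖ + ‖a i * (S * x) - T * (S * x)‖ := norm_add_le _ _
          _ < ε := by linarith
      · have he : x * (a i * b i) - x * (T * S) =
            (x * a i - x * T) * b i + ((x * T) * b i - (x * T) * S) := by
          noncomm_ring
        rw [he]
        have hb1 : ‖(x * a i - x * T) * b i‖ < ε/2 := by
          calc ‖(x * a i - x * T) * b i‖ ≤ ‖x * a i - x * T‖ * ‖b i‖ := norm_mul_le _ _
            _ ≤ ‖x * a i - x * T‖ * Mb :=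
                mul_le_mul_of_nonneg_left (hMb i) (norm_nonneg _)
            _ = Mb * ‖x * a i - x * T‖ := mul_comm _ _
            _ < ε/2 := key_mul hMb0 (norm_nonneg _) (by rw [div_div] at *; exact h3)
        calc ‖(x * a i - x * T) * b i + ((x * T) * b i - (x * T) * S)‖
            ≤ ‖(x * a i - x * T) * b i‖ + ‖(x * T) * b i - (x * T) * S‖ := norm_add_le _ _
          _ < ε := by linarith
  · -- norm closedness
    exact fun f a hf haA hab hconv => closed_part A hnd f a hf haA hab hconv
end

section
/- Let U be an ultrafilter over I and A a C*-algebra represented faithfully and nondegenerately on B(H). The set J of elements of A^{sU} represented by families that are U-strict convergent to 0 is a closed two-sided ideal of A^{sU}. -/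
open Filter

/-- Membership in `J`: bounded families in `A` which are `U`-strict convergent to `0`. -/
def MemJ {I : Type*} {H : Type*} [NormedAddCommGroup H] [InnerProductSpace ℂ H]
    [CompleteSpace H]
    (U : Ultrafilter I) (A : Set (H →L[ℂ] H)) (a : I → H →L[ℂ] H) : Prop :=
  (∀ i, a i ∈ A) ∧ (∃ M : ℝ, ∀ i, ‖a i‖ ≤ M) ∧ UStrictTo U A a 0

/-- A closed set contains ultrafilter-limits of families of its elements. -/
lemma mem_of_ultra {I : Type*} {E : Type*} [NormedAddCommGroup E]
    (U : Ultrafilter I) {S : Set E} (hS : IsClosed S) {g : I → E} {y : E}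
    (hg : ∀ i, g i ∈ S) (h : ∀ ε > (0 : ℝ), {i | ‖g i - y‖ < ε} ∈ U) : y ∈ S := by
  rw [← hS.closure_eq, Metric.mem_closure_iff]
  intro ε hε
  obtain ⟨i, hi⟩ := Filter.nonempty_of_mem (h ε hε)
  exact ⟨g i, hg i, by simpa [dist_eq_norm, norm_sub_rev] using hi⟩

set_option maxHeartbeats 1000000 in
/-- `J` is a closed two-sided ideal of `A^{sU}`: it is closed under addition and
scalar multiplication, absorbs products with members of `A^{sU}` on both sides,
and is closed in the ultrapower norm. -/
theorem stmt_7 {I : Type*} {H : Type*} [NormedAddCommGroup H]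
    [InnerProductSpace ℂ H] [CompleteSpace H]
    (U : Ultrafilter I)
    (A : NonUnitalStarSubalgebra ℂ (H →L[ℂ] H)) (hA : IsClosed (A : Set (H →L[ℂ] H)))
    (hnd : Nondegenerate (A : Set (H →L[ℂ] H))) :
    (∀ a b : I → H →L[ℂ] H, MemJ U (A : Set (H →L[ℂ] H)) a →
        MemJ U (A : Set (H →L[ℂ] H)) b → MemJ U (A : Set (H →L[ℂ] H)) (fun i => a i + b i))
    ∧ (∀ (c : ℂ) (a : I → H →L[ℂ] H), MemJ U (A : Set (H →L[ℂ] H)) a →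
        MemJ U (A : Set (H →L[ℂ] H)) (fun i => c • a i))
    ∧ (∀ a b : I → H →L[ℂ] H, MemSU U (A : Set (H →L[ℂ] H)) a →
        MemJ U (A : Set (H →L[ℂ] H)) b →
        MemJ U (A : Set (H →L[ℂ] H)) (fun i => a i * b i)
        ∧ MemJ U (A : Set (H →L[ℂ] H)) (fun i => b i * a i))
    ∧ (∀ (f : ℕ → I → H →L[ℂ] H) (a : I → H →L[ℂ] H),
        (∀ n, MemJ U (A : Set (H →L[ℂ] H)) (f n)) →
        (∀ i, a i ∈ A) → (∃ M : ℝ, ∀ i, ‖a i‖ ≤ M) →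
        MemSU U (A : Set (H →L[ℂ] H)) a →
        (∀ ε > (0 : ℝ), ∃ n₀ : ℕ, ∀ n ≥ n₀, {i | ‖f n i - a i‖ < ε} ∈ U) →
        MemJ U (A : Set (H →L[ℂ] H)) a) := by
  refine ⟨?_, ?_, ?_, ?_⟩
  · -- addition
    rintro a b ⟨haA, ⟨Ma, hMa⟩, ha⟩ ⟨hbA, ⟨Mb, hMb⟩, hb⟩
    refine ⟨fun i => A.add_mem (haA i) (hbA i),
      ⟨Ma + Mb, fun i => (norm_add_le _ _).trans (add_le_add (hMa i) (hMb i))⟩, ?_⟩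
    intro x hx ε hε
    have h1 := ha x hx (ε / 2) (by positivity)
    have h2 := hb x hx (ε / 2) (by positivity)
    filter_upwards [h1, h2] with i hi1 hi2
    simp only [Set.mem_setOf_eq, zero_mul, mul_zero, sub_zero] at hi1 hi2 ⊢
    constructor
    · calc ‖(a i + b i) * x‖ = ‖a i * x + b i * x‖ := by rw [add_mul]
        _ ≤ ‖a i * x‖ + ‖b i * x‖ := norm_add_le _ _
        _ < ε / 2 + ε / 2 := add_lt_add hi1.1 hi2.1
        _ = ε := by ring
    · calc ‖x * (a i + b i)‖ = ‖x * a i + x * b i‖ := by rw [mul_add]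
        _ ≤ ‖x * a i‖ + ‖x * b i‖ := norm_add_le _ _
        _ < ε / 2 + ε / 2 := add_lt_add hi1.2 hi2.2
        _ = ε := by ring
  · -- scalar multiplication
    rintro c a ⟨haA, ⟨Ma, hMa⟩, ha⟩
    refine ⟨fun i => SMulMemClass.smul_mem c (haA i), ⟨‖c‖ * Ma, fun i => by
      rw [norm_smul]; exact mul_le_mul_of_nonneg_left (hMa i) (norm_nonneg c)⟩, ?_⟩
    intro x hx ε hε
    have hc : (0:ℝ) < ‖c‖ + 1 := by positivity
    have h1 := ha x hx (ε / (‖c‖ + 1)) (by positivity)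
    filter_upwards [h1] with i hi1
    simp only [Set.mem_setOf_eq, zero_mul, mul_zero, sub_zero] at hi1 ⊢
    have key : ∀ t : ℝ, 0 ≤ t → t < ε / (‖c‖ + 1) → ‖c‖ * t < ε := by
      intro t ht hlt
      nlinarith [norm_nonneg c, (lt_div_iff₀ hc).mp hlt]
    constructor
    · have : (c • a i) * x = c • (a i * x) := smul_mul_assoc c (a i) x
      rw [this, norm_smul]
      exact key _ (norm_nonneg _) hi1.1
    · have : x * (c • a i) = c • (x * a i) := mul_smul_comm c x (a i)
      rw [this, norm_smul]
      exact key _ (norm_nonneg _) hi1.2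
  · -- products
    rintro a b ⟨haA, ⟨Ma, hMa⟩, T, hT⟩ ⟨hbA, ⟨Mb, hMb⟩, hb⟩
    set Ma' : ℝ := max Ma 0 with hMa'def
    set Mb' : ℝ := max Mb 0 with hMb'def
    have hMa' : ∀ i, ‖a i‖ ≤ Ma' := fun i => (hMa i).trans (le_max_left _ _)
    have hMb' : ∀ i, ‖b i‖ ≤ Mb' := fun i => (hMb i).trans (le_max_left _ _)
    have hMa'0 : (0:ℝ) ≤ Ma' := le_max_right _ _
    have hMb'0 : (0:ℝ) ≤ Mb' := le_max_right _ _
    have hbnd : ∃ M : ℝ, ∀ i, ‖a i * b i‖ ≤ M :=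
      ⟨Ma' * Mb', fun i => (norm_mul_le _ _).trans
        (mul_le_mul (hMa' i) (hMb' i) (norm_nonneg _) hMa'0)⟩
    have hbnd' : ∃ M : ℝ, ∀ i, ‖b i * a i‖ ≤ M :=
      ⟨Mb' * Ma', fun i => (norm_mul_le _ _).trans
        (mul_le_mul (hMb' i) (hMa' i) (norm_nonneg _) hMb'0)⟩
    -- limits of the form x * T and T * x lie in A
    have hxT : ∀ x ∈ A, x * T ∈ A := by
      intro x hx
      refine mem_of_ultra U hA (g := fun i => x * a i)
        (fun i => A.mul_mem hx (haA i)) (fun ε hε => ?_)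
      filter_upwards [hT x hx ε hε] with i hi
      exact hi.2
    have hTx : ∀ x ∈ A, T * x ∈ A := by
      intro x hx
      refine mem_of_ultra U hA (g := fun i => a i * x)
        (fun i => A.mul_mem (haA i) hx) (fun ε hε => ?_)
      filter_upwards [hT x hx ε hε] with i hi
      exact hi.1
    constructor
    · -- a * b
      refine ⟨fun i => A.mul_mem (haA i) (hbA i), hbnd, ?_⟩
      intro x hx ε hε
      have hMa1 : (0:ℝ) < Ma' + 1 := by positivity
      have hMb1 : (0:ℝ) < Mb' + 1 := by positivity
      have h1 := hb x hx (ε / (Ma' + 1)) (by positivity)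
      have h2 := hb (x * T) (hxT x hx) (ε / 2) (by positivity)
      have h3 := hT x hx (ε / (2 * (Mb' + 1))) (by positivity)
      filter_upwards [h1, h2, h3] with i hi1 hi2 hi3
      simp only [Set.mem_setOf_eq, zero_mul, mul_zero, sub_zero] at hi1 hi2 ⊢
      constructor
      · calc ‖a i * b i * x‖ = ‖a i * (b i * x)‖ := by rw [mul_assoc]
          _ ≤ ‖a i‖ * ‖b i * x‖ := norm_mul_le _ _
          _ ≤ Ma' * ‖b i * x‖ := by
              exact mul_le_mul_of_nonneg_right (hMa' i) (norm_nonneg _)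
          _ < ε := by
              have h' := (lt_div_iff₀ hMa1).mp hi1.1
              nlinarith [norm_nonneg (b i * x)]
      · have hsplit : x * (a i * b i) = (x * a i - x * T) * b i + (x * T) * b i := by
          noncomm_ring
        calc ‖x * (a i * b i)‖
            = ‖(x * a i - x * T) * b i + (x * T) * b i‖ := by rw [hsplit]
          _ ≤ ‖(x * a i - x * T) * b i‖ + ‖(x * T) * b i‖ := norm_add_le _ _
          _ ≤ ‖x * a i - x * T‖ * ‖b i‖ + ‖(x * T) * b i‖ := by
              exact add_le_add (norm_mul_le _ _) le_rfl
          _ < ε := by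
              have h4 := (lt_div_iff₀ (by positivity : (0:ℝ) < 2 * (Mb' + 1))).mp hi3.2
              have h5 := hi2.2
              nlinarith [norm_nonneg (x * a i - x * T), norm_nonneg (b i), hMb' i,
                mul_le_mul_of_nonneg_left (hMb' i) (norm_nonneg (x * a i - x * T))]
    · -- b * a
      refine ⟨fun i => A.mul_mem (hbA i) (haA i), hbnd', ?_⟩
      intro x hx ε hε
      have hMa1 : (0:ℝ) < Ma' + 1 := by positivity
      have hMb1 : (0:ℝ) < Mb' + 1 := by positivity
      have h1 := hb x hx (ε / (Ma' + 1)) (by positivity)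
      have h2 := hb (T * x) (hTx x hx) (ε / 2) (by positivity)
      have h3 := hT x hx (ε / (2 * (Mb' + 1))) (by positivity)
      filter_upwards [h1, h2, h3] with i hi1 hi2 hi3
      simp only [Set.mem_setOf_eq, zero_mul, mul_zero, sub_zero] at hi1 hi2 ⊢
      constructor
      · have hsplit : (b i * a i) * x = b i * (a i * x - T * x) + b i * (T * x) := by
          noncomm_ring
        calc ‖(b i * a i) * x‖
            = ‖b i * (a i * x - T * x) + b i * (T * x)‖ := by rw [hsplit]
          _ ≤ ‖b i * (a i * x - T * x)‖ + ‖b i * (T * x)‖ := norm_add_le _ _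
          _ ≤ ‖b i‖ * ‖a i * x - T * x‖ + ‖b i * (T * x)‖ := by
              exact add_le_add (norm_mul_le _ _) le_rfl
          _ < ε := by
              have h4 := (lt_div_iff₀ (by positivity : (0:ℝ) < 2 * (Mb' + 1))).mp hi3.1
              have h5 := hi2.1
              nlinarith [norm_nonneg (a i * x - T * x), norm_nonneg (b i), hMb' i,
                mul_le_mul_of_nonneg_right (hMb' i) (norm_nonneg (a i * x - T * x))]
      · calc ‖x * (b i * a i)‖ = ‖(x * b i) * a i‖ := by rw [mul_assoc]
          _ ≤ ‖x * b i‖ * ‖a i‖ := norm_mul_le _ _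
          _ ≤ ‖x * b i‖ * Ma' := by
              exact mul_le_mul_of_nonneg_left (hMa' i) (norm_nonneg _)
          _ < ε := by
              have h' := (lt_div_iff₀ hMa1).mp hi1.2
              nlinarith [norm_nonneg (x * b i)]
  · -- closedness
    rintro f a hf haA hbdd _ hconv
    refine ⟨haA, hbdd, ?_⟩
    intro x hx ε hε
    have hx1 : (0:ℝ) < ‖x‖ + 1 := by positivity
    obtain ⟨n₀, hn₀⟩ := hconv (ε / (2 * (‖x‖ + 1))) (by positivity)
    obtain ⟨hfA, ⟨Mf, hMf⟩, hf0⟩ := hf n₀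
    have h1 := hn₀ n₀ le_rfl
    have h2 := hf0 x hx (ε / 2) (by positivity)
    filter_upwards [h1, h2] with i hi1 hi2
    simp only [Set.mem_setOf_eq, zero_mul, mul_zero, sub_zero] at hi1 hi2 ⊢
    have hkey : ‖f n₀ i - a i‖ * (‖x‖ + 1) < ε / 2 := by
      have := mul_lt_mul_of_pos_right hi1 hx1
      calc ‖f n₀ i - a i‖ * (‖x‖ + 1) < ε / (2 * (‖x‖ + 1)) * (‖x‖ + 1) := this
        _ = ε / 2 := by field_simp
    constructor
    · have hsplit : a i * x = (a i - f n₀ i) * x + f n₀ i * x := by noncomm_ring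
      calc ‖a i * x‖ = ‖(a i - f n₀ i) * x + f n₀ i * x‖ := by rw [hsplit]
        _ ≤ ‖(a i - f n₀ i) * x‖ + ‖f n₀ i * x‖ := norm_add_le _ _
        _ ≤ ‖a i - f n₀ i‖ * ‖x‖ + ‖f n₀ i * x‖ := add_le_add (norm_mul_le _ _) le_rfl
        _ < ε := by
            rw [norm_sub_rev]
            nlinarith [norm_nonneg (f n₀ i - a i), norm_nonneg x, hi2.1]
    · have hsplit : x * a i = x * (a i - f n₀ i) + x * f n₀ i := by noncomm_ring
      calc ‖x * a i‖ = ‖x * (a i - f n₀ i) + x * f n₀ i‖ := by rw [hsplit]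
        _ ≤ ‖x * (a i - f n₀ i)‖ + ‖x * f n₀ i‖ := norm_add_le _ _
        _ ≤ ‖x‖ * ‖a i - f n₀ i‖ + ‖x * f n₀ i‖ := add_le_add (norm_mul_le _ _) le_rfl
        _ < ε := by
            rw [norm_sub_rev]
            nlinarith [norm_nonneg (f n₀ i - a i), norm_nonneg x, hi2.2]
end

section
/- Let U be an ultrafilter over I and A a C*-algebra represented faithfully and nondegenerately on B(H). The image of A in A^{sU}/J under the constant-family embedding a ↦ (a)_{i∈I} is an essential ideal of A^{sU}/J: if b ∈ A^{sU}/J satisfies b·a = 0 for all a ∈ A, then b = 0. -/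
open Filter

/-- auxiliary: an operator vanishing on all products `y * -` with `y ∈ A` is zero,
given nondegeneracy. -/
lemma aux_vanish {H : Type*} [NormedAddCommGroup H] [InnerProductSpace ℂ H]
    (A : Set (H →L[ℂ] H))
    (hnd : Dense (↑(Submodule.span ℂ {ξ : H | ∃ a ∈ A, ∃ η : H, a η = ξ}) : Set H))
    (f : H →L[ℂ] H) (h : ∀ y ∈ A, f * y = 0) : f = 0 := by
  have hgen : ∀ ξ ∈ Submodule.span ℂ {ξ : H | ∃ a ∈ A, ∃ η : H, a η = ξ}, f ξ = 0 := by
    intro ξ hξ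
    induction hξ using Submodule.span_induction with
    | mem ξ hξ =>
        obtain ⟨y, hy, η, rfl⟩ := hξ
        have := congrArg (fun g : H →L[ℂ] H => g η) (h y hy)
        simpa using this
    | zero => simp
    | add x y _ _ hx hy => simp [hx, hy]
    | smul c x _ hx => simp [hx]
  have : ∀ ξ : H, f ξ = 0 := by
    intro ξ
    exact congrFun (Continuous.ext_on hnd f.continuous continuous_const hgen) ξ
  exact ContinuousLinearMap.ext this

/-- The image of `A` in `A^{sU}/J` is an essential ideal: if an element `b` of
`A^{sU}` (a bounded `U`-strict convergent family with entries in `A`) satisfies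
`b · a = 0` in `A^{sU}/J` for every `a ∈ A` (i.e. the family `(b i * a)` is
`U`-strict convergent to `0`), then `b = 0` in `A^{sU}/J` (i.e. `(b i)` is
`U`-strict convergent to `0`). -/
theorem stmt_8 {I : Type*} {H : Type*} [NormedAddCommGroup H]
    [InnerProductSpace ℂ H] [CompleteSpace H]
    (U : Ultrafilter I)
    (A : NonUnitalStarSubalgebra ℂ (H →L[ℂ] H)) (hA : IsClosed (A : Set (H →L[ℂ] H)))
    (hnd : Nondegenerate (A : Set (H →L[ℂ] H)))
    (b : I → H →L[ℂ] H) (hb : ∀ i, b i ∈ A) (M : ℝ) (hM : ∀ i, ‖b i‖ ≤ M)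
    (T : H →L[ℂ] H) (hT : UStrictTo U (A : Set (H →L[ℂ] H)) b T)
    (hzero : ∀ a ∈ A, UStrictTo U (A : Set (H →L[ℂ] H)) (fun i => b i * a) 0) :
    UStrictTo U (A : Set (H →L[ℂ] H)) b 0 := by
  -- Step 1: T * a = 0 for every a ∈ A.
  have key : ∀ a ∈ A, T * a = 0 := by
    intro a ha
    apply aux_vanish (A : Set (H →L[ℂ] H)) hnd
    intro y hy
    -- Show ‖(T * a) * y‖ = 0 by an ε-argument.
    have hnorm : ‖T * a * y‖ = 0 := by
      have hle : ∀ ε > (0 : ℝ), ‖T * a * y‖ < ε := by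
        intro ε hε
        set δ := ε / (‖y‖ + 2) with hδdef
        have hy2 : (0:ℝ) < ‖y‖ + 2 := by positivity
        have hδ : 0 < δ := div_pos hε hy2
        have hS1 := hT a ha δ hδ
        have hS2 := hzero a ha y hy δ hδ
        have hmem : {i | ‖b i * a - T * a‖ < δ ∧ ‖a * b i - a * T‖ < δ} ∩
            {i | ‖(b i * a) * y - 0 * y‖ < δ ∧ ‖y * (b i * a) - y * 0‖ < δ} ∈ U :=
          Filter.inter_mem hS1 hS2
        obtain ⟨i, hi1, hi2⟩ := Filter.nonempty_of_mem hmem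
        have h1 : ‖b i * a - T * a‖ < δ := hi1.1
        have h2 : ‖b i * a * y‖ < δ := by simpa using hi2.1
        have hbound : ‖T * a * y‖ ≤ δ * ‖y‖ + δ := by
          have e1 : T * a * y = (T * a - b i * a) * y + b i * a * y := by
            rw [sub_mul, sub_add_cancel]
          calc ‖T * a * y‖ = ‖(T * a - b i * a) * y + b i * a * y‖ := by rw [← e1]
            _ ≤ ‖(T * a - b i * a) * y‖ + ‖b i * a * y‖ := norm_add_le _ _
            _ ≤ ‖T * a - b i * a‖ * ‖y‖ + ‖b i * a * y‖ := by
                gcongr; exact norm_mul_le _ _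
            _ ≤ δ * ‖y‖ + δ := by
                refine add_le_add (mul_le_mul_of_nonneg_right ?_ (norm_nonneg y)) h2.le
                rw [norm_sub_rev]; exact h1.le
        have : δ * ‖y‖ + δ < ε := by
          rw [hδdef]
          rw [div_mul_eq_mul_div, ← add_div, div_lt_iff₀ hy2]
          nlinarith [norm_nonneg y]
        linarith
      by_contra hne
      have h0 : 0 < ‖T * a * y‖ := lt_of_le_of_ne (norm_nonneg _) (Ne.symm hne)
      exact absurd (hle _ h0) (lt_irrefl _)
    exact norm_eq_zero.mp hnorm
  -- Step 2: x * T = 0 for every x ∈ A.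
  have key2 : ∀ x ∈ A, x * T = 0 := by
    intro x hx
    apply aux_vanish (A : Set (H →L[ℂ] H)) hnd
    intro y hy
    have : x * T * y = x * (T * y) := mul_assoc _ _ _
    rw [this, key y hy, mul_zero]
  -- Conclusion.
  intro x hx ε hε
  have := hT x hx ε hε
  have heq : {i | ‖b i * x - T * x‖ < ε ∧ ‖x * b i - x * T‖ < ε} =
      {i | ‖b i * x - 0 * x‖ < ε ∧ ‖x * b i - x * 0‖ < ε} := by
    simp [key x hx, key2 x hx]
  rwa [heq] at this
end

section
/- Let A be a C*-algebra represented faithfully and nondegenerately on B(H), (e_i)_{i∈I} an approximate unit, and U a cofinal ultrafilter over I. Then the quotient C*-algebra A^{sU}/J contains A as an essential ideal and satisfies the universal property of the multiplier algebra: for every C*-algebra B containing A as an ideal there is a unique *-homomorphism φ : B → A^{sU}/J restricting to the identity on A. Hence A^{sU}/J ≅ M(A). -/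
open Filter

/-- `φ : B → A^{sU}/J` (described by representing families) is a `*`-homomorphism
restricting to the identity on `A`; all identities are asserted modulo `J`,
i.e. the discrepancy families are `U`-strict convergent to `0`. -/
def IsLift {I : Type*} {H : Type*} [NormedAddCommGroup H] [InnerProductSpace ℂ H]
    [CompleteSpace H]
    (U : Ultrafilter I) (A B : NonUnitalStarSubalgebra ℂ (H →L[ℂ] H))
    (φ : B → I → (H →L[ℂ] H)) : Prop :=
  (∀ b : B, (∀ i, φ b i ∈ A) ∧ (∃ M : ℝ, ∀ i, ‖φ b i‖ ≤ M)
      ∧ ∃ T : H →L[ℂ] H, UStrictTo U (A : Set (H →L[ℂ] H)) (φ b) T)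
  ∧ (∀ b₁ b₂ : B,
      UStrictTo U (A : Set (H →L[ℂ] H)) (fun i => φ (b₁ + b₂) i - φ b₁ i - φ b₂ i) 0)
  ∧ (∀ (c : ℂ) (b : B),
      UStrictTo U (A : Set (H →L[ℂ] H)) (fun i => φ (c • b) i - c • φ b i) 0)
  ∧ (∀ b₁ b₂ : B,
      UStrictTo U (A : Set (H →L[ℂ] H)) (fun i => φ (b₁ * b₂) i - φ b₁ i * φ b₂ i) 0)
  ∧ (∀ b : B,
      UStrictTo U (A : Set (H →L[ℂ] H)) (fun i => φ (star b) i - star (φ b i)) 0)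
  ∧ (∀ b : B, (b : H →L[ℂ] H) ∈ A →
      UStrictTo U (A : Set (H →L[ℂ] H)) (fun i => φ b i - (b : H →L[ℂ] H)) 0)

lemma memU_of_tendsto {I : Type*} [SemilatticeSup I] [Nonempty I]
    (U : Ultrafilter I) (hU : ∀ i₀ : I, {i | i₀ ≤ i} ∈ U)
    {f : I → ℝ} (h : Tendsto f atTop (nhds 0)) {δ : ℝ} (hδ : 0 < δ) :
    {i | f i < δ} ∈ U := by
  obtain ⟨i₀, h0⟩ := eventually_atTop.mp (h.eventually_lt_const hδ)
  exact Filter.mem_of_superset (hU i₀) (fun i hi => h0 i hi)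

lemma bound_helper {c ε u : ℝ} (hc : 0 ≤ c) (hε : 0 < ε) (hu : 0 ≤ u)
    (h : u < ε / (c + 1)) : c * u < ε := by
  have h' : u * (c + 1) < ε := by rwa [lt_div_iff₀ (by positivity)] at h
  nlinarith

lemma norm_add6 {R : Type*} [NormedRing R] (a b c d e f : R) :
    ‖a + b + c + d + e + f‖ ≤ ‖a‖ + ‖b‖ + ‖c‖ + ‖d‖ + ‖e‖ + ‖f‖ := by
  calc ‖a + b + c + d + e + f‖ ≤ ‖a + b + c + d + e‖ + ‖f‖ := norm_add_le _ _
    _ ≤ ‖a + b + c + d‖ + ‖e‖ + ‖f‖ := by gcongr; exact norm_add_le _ _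
    _ ≤ ‖a + b + c‖ + ‖d‖ + ‖e‖ + ‖f‖ := by gcongr; exact norm_add_le _ _
    _ ≤ ‖a + b‖ + ‖c‖ + ‖d‖ + ‖e‖ + ‖f‖ := by gcongr; exact norm_add_le _ _
    _ ≤ ‖a‖ + ‖b‖ + ‖c‖ + ‖d‖ + ‖e‖ + ‖f‖ := by gcongr; exact norm_add_le _ _


section RingIdentities
variable {R : Type*} [Ring R]

lemma aux1 (x T bi a : R) : x * T * a = (x * T - x * bi) * a + x * bi * a := by noncomm_ring
lemma aux2 (bi x ej : R) : bi * x = bi * (x - x * ej) + bi * x * ej := by noncomm_ring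
lemma aux3 (bb ei x : R) : bb * ei * x - bb * x = bb * (ei * x - x) := by noncomm_ring
lemma aux4 (x bb ei : R) : x * (bb * ei) - x * bb = x * bb * ei - x * bb := by noncomm_ring
lemma aux5 (p q r : R) : (p + q) * r - p * r - q * r = 0 := by noncomm_ring
lemma aux6 (B₁ B₂ ei x : R) :
    (B₁ * B₂ * ei - B₁ * ei * (B₂ * ei)) * x
      = B₁ * B₂ * (ei * x - x) + B₁ * ((B₂ * x) - ei * (B₂ * x))
        + (B₁ * ei * B₂) * (x - ei * x) := by noncomm_ring
lemma aux7 (x B₁ B₂ ei : R) :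
    x * (B₁ * B₂ * ei - B₁ * ei * (B₂ * ei)) = (x * B₁ - x * B₁ * ei) * (B₂ * ei) := by
  noncomm_ring
lemma aux8 (S ei x : R) :
    (S * ei - ei * S) * x = S * (ei * x - x) + ((S * x) - ei * (S * x)) := by noncomm_ring
lemma aux9 (x S ei : R) :
    x * (S * ei - ei * S) = ((x * S) * ei - x * S) + (x - x * ei) * S := by noncomm_ring
lemma aux10 (Bb ei ej x p q r : R) :
    (Bb * ei - p) * x
      = Bb * (ei * x - x) + Bb * (x - ej * x)
        + (-((q - Bb * ej) * x)) + (q - p * r) * x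
        + p * ((r - ej) * x) + p * (ej * x - x) := by noncomm_ring
lemma aux11 (x Bb ei ej p q r : R) :
    x * (Bb * ei - p)
      = ((x * Bb) * ei - x * Bb) + (x - x * ej) * Bb
        + (-(x * (q - ej * Bb))) + x * (q - r * p)
        + (x * (r - ej)) * p + (x * ej - x) * p := by noncomm_ring
end RingIdentities

set_option maxHeartbeats 1000000 in
/-- `A^{sU}/J` contains `A` as an essential ideal and satisfies the universal
property of the multiplier algebra: for every C*-algebra `B ⊇ A` containing `A`
as an ideal there is a `*`-homomorphism `B → A^{sU}/J` restricting to the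
identity on `A`, unique modulo `J`.  Hence `A^{sU}/J ≅ M(A)`. -/
theorem stmt_10 {I : Type*} [SemilatticeSup I] [Nonempty I]
    {H : Type*} [NormedAddCommGroup H] [InnerProductSpace ℂ H] [CompleteSpace H]
    (U : Ultrafilter I) (hU : ∀ i₀ : I, {i | i₀ ≤ i} ∈ U)
    (A : NonUnitalStarSubalgebra ℂ (H →L[ℂ] H)) (hA : IsClosed (A : Set (H →L[ℂ] H)))
    (hnd : Nondegenerate (A : Set (H →L[ℂ] H)))
    (e : I → H →L[ℂ] H) (he : ∀ i, e i ∈ A)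
    (hpos : ∀ i, (e i).IsPositive)
    (M : ℝ) (hM : ∀ i, ‖e i‖ ≤ M)
    (happrox : ∀ x ∈ A, Tendsto (fun i => ‖x * e i - x‖) atTop (nhds 0)
        ∧ Tendsto (fun i => ‖e i * x - x‖) atTop (nhds 0)) :
    -- A sits in A^{sU}/J as an essential ideal:
    (∀ (b : I → H →L[ℂ] H), (∀ i, b i ∈ A) → (∃ Mb : ℝ, ∀ i, ‖b i‖ ≤ Mb) →
      (∃ T : H →L[ℂ] H, UStrictTo U (A : Set (H →L[ℂ] H)) b T) →
      (∀ a ∈ A, UStrictTo U (A : Set (H →L[ℂ] H)) (fun i => b i * a) 0) →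
      UStrictTo U (A : Set (H →L[ℂ] H)) b 0)
    -- and the universal property holds:
    ∧ (∀ B : NonUnitalStarSubalgebra ℂ (H →L[ℂ] H), IsClosed (B : Set (H →L[ℂ] H)) →
        A ≤ B → (∀ b ∈ B, ∀ a ∈ A, b * a ∈ A ∧ a * b ∈ A) →
        ∃ φ : B → I → (H →L[ℂ] H), IsLift U A B φ ∧
          ∀ φ' : B → I → (H →L[ℂ] H), IsLift U A B φ' →
            ∀ b : B, UStrictTo U (A : Set (H →L[ℂ] H)) (fun i => φ b i - φ' b i) 0) := by
  have hM0 : (0:ℝ) ≤ M := le_trans (norm_nonneg _) (hM (Classical.arbitrary I))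
  constructor
  · -- ===================== Part 1 : essentiality =====================
    rintro b hbA ⟨Mb, hMb⟩ ⟨T, hT⟩ hann
    have hMb0 : (0:ℝ) ≤ Mb := le_trans (norm_nonneg _) (hMb (Classical.arbitrary I))
    have hxT : ∀ x ∈ A, x * T = 0 := by
      intro x hx
      have hgen : ∀ a ∈ (A : Set (H →L[ℂ] H)), x * T * a = 0 := by
        intro a ha
        have hnorm : ∀ δ > (0:ℝ), ‖x * T * a‖ ≤ δ * (‖a‖ + 1) := by
          intro δ hδ
          obtain ⟨i, hi1, hi2⟩ := Filter.nonempty_of_mem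
            (Filter.inter_mem (hT x hx δ hδ) (hann a ha x hx δ hδ))
          have e1 : ‖x * b i - x * T‖ < δ := hi1.2
          have e2 : ‖x * (b i * a) - x * 0‖ < δ := hi2.2
          have e2' : ‖x * b i * a‖ < δ := by
            rw [mul_zero, sub_zero, ← mul_assoc] at e2; exact e2
          rw [norm_sub_rev] at e1
          calc ‖x * T * a‖ = ‖(x * T - x * b i) * a + x * b i * a‖ := by rw [← aux1]
            _ ≤ ‖(x * T - x * b i) * a‖ + ‖x * b i * a‖ := norm_add_le _ _
            _ ≤ ‖x * T - x * b i‖ * ‖a‖ + ‖x * b i * a‖ := by gcongr; exact norm_mul_le _ _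
            _ ≤ δ * (‖a‖ + 1) := by nlinarith [norm_nonneg a, e1, e2']
        by_contra hc
        have hp : 0 < ‖x * T * a‖ := (norm_nonneg _).lt_of_ne (fun h => hc (norm_eq_zero.mp h.symm))
        have ha1 : (0:ℝ) < ‖a‖ + 1 := by positivity
        have hval := hnorm (‖x * T * a‖ / (2 * (‖a‖ + 1))) (by positivity)
        have heq : ‖x * T * a‖ / (2 * (‖a‖ + 1)) * (‖a‖ + 1) = ‖x * T * a‖ / 2 := by
          field_simp
        rw [heq] at hval
        linarith
      have hker : ∀ ξ : H, (x * T) ξ = 0 := by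
        have hcl : IsClosed {ξ : H | (x * T) ξ = 0} :=
          isClosed_eq (x * T).continuous continuous_const
        have hsub : (↑(Submodule.span ℂ {ξ : H | ∃ a ∈ (A : Set (H →L[ℂ] H)), ∃ η : H, a η = ξ}) : Set H)
            ⊆ {ξ : H | (x * T) ξ = 0} := by
          have hle : Submodule.span ℂ {ξ : H | ∃ a ∈ (A : Set (H →L[ℂ] H)), ∃ η : H, a η = ξ}
              ≤ LinearMap.ker ((x * T : H →L[ℂ] H) : H →ₗ[ℂ] H) := by
            rw [Submodule.span_le]
            rintro _ ⟨a, ha, η, rfl⟩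
            simp only [SetLike.mem_coe, LinearMap.mem_ker, ContinuousLinearMap.coe_coe]
            have h1 : (x * T) (a η) = ((x * T) * a) η := rfl
            rw [h1, hgen a ha]; rfl
          intro ξ hξ
          exact hle hξ
        intro ξ
        exact (hcl.closure_subset_iff.mpr hsub) (hnd ξ)
      ext ξ
      simpa using hker ξ
    intro x hx ε hε
    obtain ⟨j, hj⟩ := ((happrox x hx).1.eventually_lt_const
      (show (0:ℝ) < ε / (2 * (Mb + 1)) by positivity)).exists
    have S1 : {i | ‖b i * x - T * x‖ < ε ∧ ‖x * b i - x * T‖ < ε} ∈ U := hT x hx ε hε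
    have S2 : {i | ‖(b i * x) * e j - 0 * e j‖ < ε / 2 ∧ ‖e j * (b i * x) - e j * 0‖ < ε / 2} ∈ U :=
      hann x hx (e j) (he j) (ε / 2) (by positivity)
    refine Filter.mem_of_superset (Filter.inter_mem S1 S2) ?_
    rintro i ⟨hi1, hi2⟩
    constructor
    · rw [zero_mul, sub_zero]
      have h2 : ‖b i * x * e j‖ < ε / 2 := by
        have := hi2.1; rwa [zero_mul, sub_zero] at this
      have hsplit : ‖b i * x‖ ≤ ‖b i * (x - x * e j)‖ + ‖b i * x * e j‖ := by
        have heq : ‖b i * x‖ = ‖b i * (x - x * e j) + b i * x * e j‖ := by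
          rw [← aux2]
        rw [heq]; exact norm_add_le _ _
      have hb1 : ‖b i * (x - x * e j)‖ ≤ Mb * ‖x - x * e j‖ :=
        (norm_mul_le _ _).trans (by gcongr; exact hMb i)
      have hb2 : Mb * ‖x - x * e j‖ < ε / 2 := by
        rw [norm_sub_rev]
        calc Mb * ‖x * e j - x‖ ≤ Mb * (ε / (2 * (Mb + 1))) := mul_le_mul_of_nonneg_left hj.le hMb0
          _ < ε / 2 := by
              rw [← mul_div_assoc, div_lt_div_iff₀ (by positivity) (by norm_num : (0:ℝ) < 2)]
              nlinarith
      linarith [hsplit, hb1, hb2, h2]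
    · rw [mul_zero, sub_zero]
      have := hi1.2
      rwa [hxT x hx, sub_zero] at this
  · -- ===================== Part 2 : universal property =====================
    intro B hB hAB hideal
    refine ⟨fun b i => (b : H →L[ℂ] H) * e i, ⟨?_, ?_, ?_, ?_, ?_, ?_⟩, ?_⟩
    · -- component 1 : values in A, bounded, strictly convergent
      intro b
      refine ⟨fun i => (hideal b b.2 (e i) (he i)).1,
        ⟨‖(b : H →L[ℂ] H)‖ * M, fun i =>
          (norm_mul_le _ _).trans (mul_le_mul_of_nonneg_left (hM i) (norm_nonneg _))⟩,
        ⟨(b : H →L[ℂ] H), ?_⟩⟩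
      intro x hx ε hε
      have hxb : x * (b : H →L[ℂ] H) ∈ A := (hideal b b.2 x hx).2
      have S1 := memU_of_tendsto U hU (happrox x hx).2
        (show (0:ℝ) < ε / (‖(b : H →L[ℂ] H)‖ + 1) by positivity)
      have S2 := memU_of_tendsto U hU (happrox _ hxb).1 hε
      refine Filter.mem_of_superset (Filter.inter_mem S1 S2) ?_
      rintro i ⟨h1, h2⟩
      constructor
      · rw [aux3]
        calc ‖(b : H →L[ℂ] H) * (e i * x - x)‖
            ≤ ‖(b : H →L[ℂ] H)‖ * ‖e i * x - x‖ := norm_mul_le _ _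
          _ < ε := bound_helper (norm_nonneg _) hε (norm_nonneg _) h1
      · rw [aux4]; exact h2
    · -- component 2 : additivity (exact)
      intro b₁ b₂ x hx ε hε
      have hz : ∀ i, ((b₁ + b₂ : B) : H →L[ℂ] H) * e i
          - (b₁ : H →L[ℂ] H) * e i - (b₂ : H →L[ℂ] H) * e i = 0 := by
        intro i; push_cast; exact aux5 _ _ _
      refine Filter.mem_of_superset Filter.univ_mem ?_
      intro i _
      simp only [Set.mem_setOf_eq, hz i]
      simp [hε]
    · -- component 3 : homogeneity (exact)
      intro c b x hx ε hε
      have hz : ∀ i, ((c • b : B) : H →L[ℂ] H) * e i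
          - c • ((b : H →L[ℂ] H) * e i) = 0 := by
        intro i; push_cast; rw [smul_mul_assoc]; abel
      refine Filter.mem_of_superset Filter.univ_mem ?_
      intro i _
      simp only [Set.mem_setOf_eq, hz i]
      simp [hε]
    · -- component 4 : multiplicativity mod J
      intro b₁ b₂ x hx ε hε
      set B₁ : H →L[ℂ] H := (b₁ : H →L[ℂ] H) with hB₁
      set B₂ : H →L[ℂ] H := (b₂ : H →L[ℂ] H) with hB₂
      have hB₂x : B₂ * x ∈ A := (hideal B₂ b₂.2 x hx).1
      have hxB₁ : x * B₁ ∈ A := (hideal B₁ b₁.2 x hx).2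
      set C : ℝ := ‖B₁‖ * ‖B₂‖ + ‖B₁‖ + ‖B₁‖ * M * ‖B₂‖ + ‖B₂‖ * M with hC
      have hC0 : (0:ℝ) ≤ C := by positivity
      set δ : ℝ := ε / (C + 1) with hδdef
      have hδ : 0 < δ := by positivity
      have hCδ : C * δ < ε := by
        rw [hδdef, ← mul_div_assoc, div_lt_iff₀ (by positivity)]
        nlinarith
      have S1 := memU_of_tendsto U hU (happrox x hx).2 hδ
      have S2 := memU_of_tendsto U hU (happrox _ hB₂x).2 hδ
      have S3 := memU_of_tendsto U hU (happrox _ hxB₁).1 hδ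
      refine Filter.mem_of_superset (Filter.inter_mem (Filter.inter_mem S1 S2) S3) ?_
      rintro i ⟨⟨h1, h2⟩, h3⟩
      simp only [Set.mem_setOf_eq] at h1 h2 h3 ⊢
      have hcoe : ((b₁ * b₂ : B) : H →L[ℂ] H) = B₁ * B₂ := rfl
      constructor
      · rw [zero_mul, sub_zero]
        have heq : (((b₁ * b₂ : B) : H →L[ℂ] H) * e i - B₁ * e i * (B₂ * e i)) * x
            = B₁ * B₂ * (e i * x - x) + B₁ * ((B₂ * x) - e i * (B₂ * x))
              + (B₁ * e i * B₂) * (x - e i * x) := by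
          rw [hcoe]; exact aux6 _ _ _ _
        rw [heq]
        have t1 : ‖B₁ * B₂ * (e i * x - x)‖ ≤ ‖B₁‖ * ‖B₂‖ * δ :=
          (norm_mul_le _ _).trans (mul_le_mul (norm_mul_le _ _) h1.le (norm_nonneg _)
            (by positivity))
        have t2 : ‖B₁ * ((B₂ * x) - e i * (B₂ * x))‖ ≤ ‖B₁‖ * δ := by
          refine (norm_mul_le _ _).trans (mul_le_mul_of_nonneg_left ?_ (norm_nonneg _))
          rw [norm_sub_rev]; exact h2.le
        have t3 : ‖(B₁ * e i * B₂) * (x - e i * x)‖ ≤ ‖B₁‖ * M * ‖B₂‖ * δ := by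
          refine (norm_mul_le _ _).trans (mul_le_mul ?_ ?_ (norm_nonneg _) (by positivity))
          · calc ‖B₁ * e i * B₂‖ ≤ ‖B₁ * e i‖ * ‖B₂‖ := norm_mul_le _ _
              _ ≤ ‖B₁‖ * ‖e i‖ * ‖B₂‖ := by gcongr; exact norm_mul_le _ _
              _ ≤ ‖B₁‖ * M * ‖B₂‖ := by gcongr; exact hM i
          · rw [norm_sub_rev]; exact h1.le
        calc ‖B₁ * B₂ * (e i * x - x) + B₁ * ((B₂ * x) - e i * (B₂ * x))
              + (B₁ * e i * B₂) * (x - e i * x)‖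
            ≤ ‖B₁ * B₂ * (e i * x - x)‖ + ‖B₁ * ((B₂ * x) - e i * (B₂ * x))‖
              + ‖(B₁ * e i * B₂) * (x - e i * x)‖ := by
              refine (norm_add_le _ _).trans ?_
              gcongr
              exact norm_add_le _ _
          _ ≤ ‖B₁‖ * ‖B₂‖ * δ + ‖B₁‖ * δ + ‖B₁‖ * M * ‖B₂‖ * δ := by
              exact add_le_add (add_le_add t1 t2) t3
          _ ≤ C * δ := by rw [hC]; nlinarith [mul_nonneg (mul_nonneg (norm_nonneg B₂) hM0) hδ.le]
          _ < ε := hCδ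
      · rw [mul_zero, sub_zero]
        have heq : x * (((b₁ * b₂ : B) : H →L[ℂ] H) * e i - B₁ * e i * (B₂ * e i))
            = (x * B₁ - x * B₁ * e i) * (B₂ * e i) := by
          rw [hcoe]; exact aux7 _ _ _ _
        rw [heq]
        have hb2e : ‖B₂ * e i‖ ≤ ‖B₂‖ * M :=
          (norm_mul_le _ _).trans (by gcongr; exact hM i)
        calc ‖(x * B₁ - x * B₁ * e i) * (B₂ * e i)‖
            ≤ ‖x * B₁ - x * B₁ * e i‖ * ‖B₂ * e i‖ := norm_mul_le _ _
          _ ≤ δ * (‖B₂‖ * M) := by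
              refine mul_le_mul ?_ hb2e (norm_nonneg _) hδ.le
              rw [norm_sub_rev]; exact h3.le
          _ ≤ C * δ := by
              rw [hC]
              nlinarith [mul_nonneg (mul_nonneg (norm_nonneg B₁) (norm_nonneg B₂)) hδ.le,
                mul_nonneg (norm_nonneg B₁) hδ.le,
                mul_nonneg (mul_nonneg (mul_nonneg (norm_nonneg B₁) hM0) (norm_nonneg B₂)) hδ.le]
          _ < ε := hCδ
    · -- component 5 : star mod J
      intro b x hx ε hε
      set S : H →L[ℂ] H := star (b : H →L[ℂ] H) with hS
      have hSB : S ∈ B := star_mem b.2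
      have hSx : S * x ∈ A := (hideal S hSB x hx).1
      have hxS : x * S ∈ A := (hideal S hSB x hx).2
      set δ : ℝ := ε / (‖S‖ + 2) with hδdef
      have hδ : 0 < δ := by positivity
      have hfin : (‖S‖ + 1) * δ < ε := by
        rw [hδdef, ← mul_div_assoc, div_lt_iff₀ (by positivity)]
        nlinarith [norm_nonneg S]
      have hcoe : ((star b : B) : H →L[ℂ] H) = S := rfl
      have hstar_e : ∀ i, star ((b : H →L[ℂ] H) * e i) = e i * S := by
        intro i
        rw [star_mul, (hpos i).isSelfAdjoint.star_eq, hS]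
      have S1 := memU_of_tendsto U hU (happrox x hx).2 hδ
      have S2 := memU_of_tendsto U hU (happrox _ hSx).2 hδ
      have S3 := memU_of_tendsto U hU (happrox _ hxS).1 hδ
      have S4 := memU_of_tendsto U hU (happrox x hx).1 hδ
      refine Filter.mem_of_superset
        (Filter.inter_mem (Filter.inter_mem S1 S2) (Filter.inter_mem S3 S4)) ?_
      rintro i ⟨⟨h1, h2⟩, ⟨h3, h4⟩⟩
      simp only [Set.mem_setOf_eq] at h1 h2 h3 h4 ⊢
      rw [hcoe, hstar_e i]
      constructor
      · rw [zero_mul, sub_zero]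
        have heq : (S * e i - e i * S) * x
            = S * (e i * x - x) + ((S * x) - e i * (S * x)) := aux8 _ _ _
        rw [heq]
        have t1 : ‖S * (e i * x - x)‖ ≤ ‖S‖ * δ :=
          (norm_mul_le _ _).trans (mul_le_mul_of_nonneg_left h1.le (norm_nonneg _))
        have t2 : ‖(S * x) - e i * (S * x)‖ ≤ δ := by rw [norm_sub_rev]; exact h2.le
        calc ‖S * (e i * x - x) + ((S * x) - e i * (S * x))‖
            ≤ ‖S * (e i * x - x)‖ + ‖(S * x) - e i * (S * x)‖ := norm_add_le _ _
          _ ≤ ‖S‖ * δ + δ := add_le_add t1 t2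
          _ = (‖S‖ + 1) * δ := by ring
          _ < ε := hfin
      · rw [mul_zero, sub_zero]
        have heq : x * (S * e i - e i * S)
            = ((x * S) * e i - x * S) + (x - x * e i) * S := aux9 _ _ _
        rw [heq]
        have t1 : ‖(x * S) * e i - x * S‖ ≤ δ := h3.le
        have t2 : ‖(x - x * e i) * S‖ ≤ δ * ‖S‖ := by
          refine (norm_mul_le _ _).trans (mul_le_mul_of_nonneg_right ?_ (norm_nonneg _))
          rw [norm_sub_rev]; exact h4.le
        calc ‖((x * S) * e i - x * S) + (x - x * e i) * S‖
            ≤ ‖(x * S) * e i - x * S‖ + ‖(x - x * e i) * S‖ := norm_add_le _ _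
          _ ≤ δ + δ * ‖S‖ := add_le_add t1 t2
          _ = (‖S‖ + 1) * δ := by ring
          _ < ε := hfin
    · -- component 6 : identity on A mod J
      intro b hbA x hx ε hε
      have S1 := memU_of_tendsto U hU (happrox _ hbA).1
        (show (0:ℝ) < ε / (‖x‖ + 1) by positivity)
      refine Filter.mem_of_superset S1 ?_
      intro i h1
      simp only [Set.mem_setOf_eq] at h1 ⊢
      constructor
      · rw [zero_mul, sub_zero]
        calc ‖((b : H →L[ℂ] H) * e i - (b : H →L[ℂ] H)) * x‖
            ≤ ‖(b : H →L[ℂ] H) * e i - (b : H →L[ℂ] H)‖ * ‖x‖ := norm_mul_le _ _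
          _ = ‖x‖ * ‖(b : H →L[ℂ] H) * e i - (b : H →L[ℂ] H)‖ := mul_comm _ _
          _ < ε := bound_helper (norm_nonneg _) hε (norm_nonneg _) h1
      · rw [mul_zero, sub_zero]
        calc ‖x * ((b : H →L[ℂ] H) * e i - (b : H →L[ℂ] H))‖
            ≤ ‖x‖ * ‖(b : H →L[ℂ] H) * e i - (b : H →L[ℂ] H)‖ := norm_mul_le _ _
          _ < ε := bound_helper (norm_nonneg _) hε (norm_nonneg _) h1
    · -- uniqueness mod J
      rintro φ' ⟨h0, hadd, hsmul, hmul, hstar', hres⟩ b x hx ε hε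
      obtain ⟨hφ'A, ⟨M', hM'⟩, -⟩ := h0 b
      have hM'0 : (0:ℝ) ≤ M' := le_trans (norm_nonneg _) (hM' (Classical.arbitrary I))
      set Bb : H →L[ℂ] H := (b : H →L[ℂ] H) with hBb
      set δ : ℝ := ε / (2 * ‖Bb‖ + 2 * M' + 4) with hδdef
      have hδ : 0 < δ := by positivity
      have hfin : (2 * ‖Bb‖ + 2 * M' + 3) * δ < ε := by
        rw [hδdef, ← mul_div_assoc, div_lt_iff₀ (by positivity)]
        nlinarith [norm_nonneg Bb]
      obtain ⟨j, hj1, hj2⟩ := (((happrox x hx).2.eventually_lt_const hδ).and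
        ((happrox x hx).1.eventually_lt_const hδ)).exists
      set ej : B := ⟨e j, hAB (he j)⟩ with hejdef
      have hcoe_ej : ((ej : B) : H →L[ℂ] H) = e j := rfl
      have hcoe_bej : ((b * ej : B) : H →L[ℂ] H) = Bb * e j := rfl
      have hcoe_ejb : ((ej * b : B) : H →L[ℂ] H) = e j * Bb := rfl
      have hbejA : ((b * ej : B) : H →L[ℂ] H) ∈ A := by
        rw [hcoe_bej]; exact (hideal Bb b.2 (e j) (he j)).1
      have hejbA : ((ej * b : B) : H →L[ℂ] H) ∈ A := by
        rw [hcoe_ejb]; exact (hideal Bb b.2 (e j) (he j)).2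
      have hejA : ((ej : B) : H →L[ℂ] H) ∈ A := he j
      have hxBb : x * Bb ∈ A := (hideal Bb b.2 x hx).2
      have S1 := memU_of_tendsto U hU (happrox x hx).2 hδ
      have S2 := memU_of_tendsto U hU (happrox _ hxBb).1 hδ
      have S3 := hres (b * ej) hbejA x hx δ hδ
      have S4 := hmul b ej x hx δ hδ
      have S5 := hres ej hejA x hx δ hδ
      have S6 := hres (ej * b) hejbA x hx δ hδ
      have S7 := hmul ej b x hx δ hδ
      refine Filter.mem_of_superset
        (Filter.inter_mem (Filter.inter_mem (Filter.inter_mem S1 S2) (Filter.inter_mem S3 S4))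
          (Filter.inter_mem S5 (Filter.inter_mem S6 S7))) ?_
      rintro i ⟨⟨⟨h1, h2⟩, ⟨h3, h4⟩⟩, ⟨h5, ⟨h6, h7⟩⟩⟩
      simp only [Set.mem_setOf_eq] at h1 h2 h3 h4 h5 h6 h7 ⊢
      rw [zero_mul, sub_zero, mul_zero, sub_zero] at h3 h4 h5 h6 h7 ⊢
      rw [hcoe_bej] at h3
      rw [hcoe_ejb] at h6
      constructor
      · -- right-hand estimate
        have heq : (Bb * e i - φ' b i) * x
            = Bb * (e i * x - x) + Bb * (x - e j * x)
              + (-((φ' (b * ej) i - Bb * e j) * x))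
              + (φ' (b * ej) i - φ' b i * φ' ej i) * x
              + φ' b i * ((φ' ej i - e j) * x)
              + φ' b i * (e j * x - x) := aux10 _ _ _ _ _ _ _
        rw [heq]
        have t1 : ‖Bb * (e i * x - x)‖ ≤ ‖Bb‖ * δ :=
          (norm_mul_le _ _).trans (mul_le_mul_of_nonneg_left h1.le (norm_nonneg _))
        have t2 : ‖Bb * (x - e j * x)‖ ≤ ‖Bb‖ * δ := by
          refine (norm_mul_le _ _).trans (mul_le_mul_of_nonneg_left ?_ (norm_nonneg _))
          rw [norm_sub_rev]; exact hj1.le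
        have t3 : ‖-((φ' (b * ej) i - Bb * e j) * x)‖ ≤ δ := by
          rw [norm_neg]; exact h3.1.le
        have t4 : ‖(φ' (b * ej) i - φ' b i * φ' ej i) * x‖ ≤ δ := h4.1.le
        have t5 : ‖φ' b i * ((φ' ej i - e j) * x)‖ ≤ M' * δ :=
          (norm_mul_le _ _).trans (mul_le_mul (hM' i) h5.1.le (norm_nonneg _) hM'0)
        have t6 : ‖φ' b i * (e j * x - x)‖ ≤ M' * δ :=
          (norm_mul_le _ _).trans (mul_le_mul (hM' i) hj1.le (norm_nonneg _) hM'0)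
        calc ‖Bb * (e i * x - x) + Bb * (x - e j * x)
              + (-((φ' (b * ej) i - Bb * e j) * x))
              + (φ' (b * ej) i - φ' b i * φ' ej i) * x
              + φ' b i * ((φ' ej i - e j) * x)
              + φ' b i * (e j * x - x)‖
            ≤ ‖Bb * (e i * x - x)‖ + ‖Bb * (x - e j * x)‖
              + ‖-((φ' (b * ej) i - Bb * e j) * x)‖
              + ‖(φ' (b * ej) i - φ' b i * φ' ej i) * x‖
              + ‖φ' b i * ((φ' ej i - e j) * x)‖
              + ‖φ' b i * (e j * x - x)‖ := norm_add6 _ _ _ _ _ _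
          _ ≤ ‖Bb‖ * δ + ‖Bb‖ * δ + δ + δ + M' * δ + M' * δ :=
              add_le_add (add_le_add (add_le_add (add_le_add (add_le_add t1 t2) t3) t4) t5) t6
          _ ≤ (2 * ‖Bb‖ + 2 * M' + 3) * δ := by nlinarith [hδ.le]
          _ < ε := hfin
      · -- left-hand estimate
        have heq : x * (Bb * e i - φ' b i)
            = ((x * Bb) * e i - x * Bb) + (x - x * e j) * Bb
              + (-(x * (φ' (ej * b) i - e j * Bb)))
              + x * (φ' (ej * b) i - φ' ej i * φ' b i)
              + (x * (φ' ej i - e j)) * φ' b i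
              + (x * e j - x) * φ' b i := aux11 _ _ _ _ _ _ _
        rw [heq]
        have t1 : ‖(x * Bb) * e i - x * Bb‖ ≤ δ := h2.le
        have t2 : ‖(x - x * e j) * Bb‖ ≤ δ * ‖Bb‖ := by
          refine (norm_mul_le _ _).trans (mul_le_mul_of_nonneg_right ?_ (norm_nonneg _))
          rw [norm_sub_rev]; exact hj2.le
        have t3 : ‖-(x * (φ' (ej * b) i - e j * Bb))‖ ≤ δ := by
          rw [norm_neg]; exact h6.2.le
        have t4 : ‖x * (φ' (ej * b) i - φ' ej i * φ' b i)‖ ≤ δ := h7.2.le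
        have t5 : ‖(x * (φ' ej i - e j)) * φ' b i‖ ≤ δ * M' :=
          (norm_mul_le _ _).trans (mul_le_mul h5.2.le (hM' i) (norm_nonneg _) hδ.le)
        have t6 : ‖(x * e j - x) * φ' b i‖ ≤ δ * M' :=
          (norm_mul_le _ _).trans (mul_le_mul hj2.le (hM' i) (norm_nonneg _) hδ.le)
        calc ‖((x * Bb) * e i - x * Bb) + (x - x * e j) * Bb
              + (-(x * (φ' (ej * b) i - e j * Bb)))
              + x * (φ' (ej * b) i - φ' ej i * φ' b i)
              + (x * (φ' ej i - e j)) * φ' b i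
              + (x * e j - x) * φ' b i‖
            ≤ ‖(x * Bb) * e i - x * Bb‖ + ‖(x - x * e j) * Bb‖
              + ‖-(x * (φ' (ej * b) i - e j * Bb))‖
              + ‖x * (φ' (ej * b) i - φ' ej i * φ' b i)‖
              + ‖(x * (φ' ej i - e j)) * φ' b i‖
              + ‖(x * e j - x) * φ' b i‖ := norm_add6 _ _ _ _ _ _
          _ ≤ δ + δ * ‖Bb‖ + δ + δ + δ * M' + δ * M' :=
              add_le_add (add_le_add (add_le_add (add_le_add (add_le_add t1 t2) t3) t4) t5) t6
          _ ≤ (2 * ‖Bb‖ + 2 * M' + 3) * δ := by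
              nlinarith [mul_nonneg (norm_nonneg Bb) hδ.le, hδ.le]
          _ < ε := hfin
end

section
/- Let A be a C*-algebra represented faithfully and nondegenerately on B(H), (e_i)_{i∈I} an approximate unit, and U a cofinal ultrafilter over I. The map φ : A^{sU} → B(H) sending a U-strict convergent family to its U-strict limit is a surjective *-homomorphism onto M := {m ∈ B(H) : am ∈ A and ma ∈ A for all a ∈ A}, with kernel J. Consequently A^{sU}/J ≅ M, and in particular M(A) is unital, with unit the image of (e_i)_{i∈I}. -/
open Filter Topology

section UStrictTo

variable {I H : Type*} [NormedAddCommGroup H] [InnerProductSpace ℂ H] [CompleteSpace H]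
  {U : Ultrafilter I} {a : I → H →L[ℂ] H} {T : H →L[ℂ] H}

theorem uStrictTo_iff_tendsto {A : Set (H →L[ℂ] H)} :
    UStrictTo U A a T ↔ ∀ x ∈ A,
      Tendsto (fun i => a i * x) U (𝓝 (T * x)) ∧ Tendsto (fun i => x * a i) U (𝓝 (x * T)) := by
  simp only [Metric.tendsto_nhds, dist_eq_norm, ← forall_and, ← eventually_and]
  rfl

theorem UStrictTo.mul_mem_of_isClosed {S : Type*} [SetLike S (H →L[ℂ] H)]
    [MulMemClass S (H →L[ℂ] H)] {A : S} (hA : IsClosed (A : Set (H →L[ℂ] H)))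
    (ha : ∀ i, a i ∈ A) (hT : UStrictTo U (A : Set (H →L[ℂ] H)) a T) {x : H →L[ℂ] H}
    (hx : x ∈ A) : x * T ∈ A ∧ T * x ∈ A := by
  obtain ⟨hright, hleft⟩ := uStrictTo_iff_tendsto.1 hT x hx
  exact ⟨hA.mem_of_tendsto hleft (.of_forall fun i => mul_mem hx (ha i)),
    hA.mem_of_tendsto hright (.of_forall fun i => mul_mem (ha i) hx)⟩

end UStrictTo

theorem stmt_11_general {I : Type*} [SemilatticeSup I]
    {H : Type*} [NormedAddCommGroup H] [InnerProductSpace ℂ H] [CompleteSpace H]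
    (U : Ultrafilter I) (hU : ∀ i₀ : I, {i | i₀ ≤ i} ∈ U)
    (A : NonUnitalStarSubalgebra ℂ (H →L[ℂ] H)) (hA : IsClosed (A : Set (H →L[ℂ] H)))
    (e : I → H →L[ℂ] H) (he : ∀ i, e i ∈ A)
    (M : ℝ) (hM : ∀ i, ‖e i‖ ≤ M)
    (happrox : ∀ x ∈ A, Tendsto (fun i => ‖x * e i - x‖) atTop (nhds 0)
        ∧ Tendsto (fun i => ‖e i * x - x‖) atTop (nhds 0)) :
    -- the U-strict limit of any member of A^{sU} lies in the idealizer M: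
    (∀ (a : I → H →L[ℂ] H), (∀ i, a i ∈ A) → (∃ Ma : ℝ, ∀ i, ‖a i‖ ≤ Ma) →
      ∀ T : H →L[ℂ] H, UStrictTo U (A : Set (H →L[ℂ] H)) a T →
        ∀ x ∈ A, x * T ∈ A ∧ T * x ∈ A)
    -- surjectivity: every m in the idealizer M is a U-strict limit, namely of (m e i):
    ∧ (∀ m : H →L[ℂ] H, (∀ x ∈ A, x * m ∈ A ∧ m * x ∈ A) →
        (∀ i, m * e i ∈ A) ∧ (∃ Mm : ℝ, ∀ i, ‖m * e i‖ ≤ Mm)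
        ∧ UStrictTo U (A : Set (H →L[ℂ] H)) (fun i => m * e i) m)
    -- the image of (e i) is the unit: (e i) is U-strict convergent to 1:
    ∧ UStrictTo U (A : Set (H →L[ℂ] H)) e 1 := by
  have hU_le : (U : Filter I) ≤ atTop := le_iInf fun i₀ => le_principal_iff.2 (hU i₀)
  have unit : ∀ x ∈ A, Tendsto (fun i => e i * x) U (𝓝 x) ∧ Tendsto (fun i => x * e i) U (𝓝 x) :=
    fun x hx => ⟨(tendsto_iff_norm_sub_tendsto_zero.2 (happrox x hx).2).mono_left hU_le,
      (tendsto_iff_norm_sub_tendsto_zero.2 (happrox x hx).1).mono_left hU_le⟩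
  refine ⟨fun a ha _ T hT x hx => hT.mul_mem_of_isClosed hA ha hx, fun m hm => ?_, ?_⟩
  · refine ⟨fun i => (hm (e i) (he i)).2,
      ⟨‖m‖ * M, fun i => (norm_mul_le m (e i)).trans (by gcongr; exact hM i)⟩, ?_⟩
    refine uStrictTo_iff_tendsto.2 fun x hx => ⟨?_, ?_⟩
    · simpa only [mul_assoc] using (unit x hx).1.const_mul m
    · simpa only [mul_assoc] using (unit (x * m) (hm x hx).1).2
  · exact uStrictTo_iff_tendsto.2 fun x hx => by simpa only [one_mul, mul_one] using unit x hx

/-- `A^{sU}/J` is isomorphic to the idealizer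
`M = {m ∈ B(H) : a m ∈ A and m a ∈ A for all a ∈ A}` via the `U`-strict limit map:
every `U`-strict limit of a bounded family in `A` lies in `M`; conversely for every
`m ∈ M` the family `(m e i)` has entries in `A`, is bounded and is `U`-strict
convergent to `m`; and the approximate unit `(e i)` is `U`-strict convergent to `1`,
so that `M(A)` is unital with unit the image of `(e i)`. -/
theorem stmt_11 {I : Type*} [SemilatticeSup I] [Nonempty I]
    {H : Type*} [NormedAddCommGroup H] [InnerProductSpace ℂ H] [CompleteSpace H]
    (U : Ultrafilter I) (hU : ∀ i₀ : I, {i | i₀ ≤ i} ∈ U)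
    (A : NonUnitalStarSubalgebra ℂ (H →L[ℂ] H)) (hA : IsClosed (A : Set (H →L[ℂ] H)))
    (hnd : Nondegenerate (A : Set (H →L[ℂ] H)))
    (e : I → H →L[ℂ] H) (he : ∀ i, e i ∈ A)
    (hpos : ∀ i, (e i).IsPositive)
    (M : ℝ) (hM : ∀ i, ‖e i‖ ≤ M)
    (happrox : ∀ x ∈ A, Tendsto (fun i => ‖x * e i - x‖) atTop (nhds 0)
        ∧ Tendsto (fun i => ‖e i * x - x‖) atTop (nhds 0)) :
    -- the U-strict limit of any member of A^{sU} lies in the idealizer M: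
    (∀ (a : I → H →L[ℂ] H), (∀ i, a i ∈ A) → (∃ Ma : ℝ, ∀ i, ‖a i‖ ≤ Ma) →
      ∀ T : H →L[ℂ] H, UStrictTo U (A : Set (H →L[ℂ] H)) a T →
        ∀ x ∈ A, x * T ∈ A ∧ T * x ∈ A)
    -- surjectivity: every m in the idealizer M is a U-strict limit, namely of (m e i):
    ∧ (∀ m : H →L[ℂ] H, (∀ x ∈ A, x * m ∈ A ∧ m * x ∈ A) →
        (∀ i, m * e i ∈ A) ∧ (∃ Mm : ℝ, ∀ i, ‖m * e i‖ ≤ Mm)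
        ∧ UStrictTo U (A : Set (H →L[ℂ] H)) (fun i => m * e i) m)
    -- the image of (e i) is the unit: (e i) is U-strict convergent to 1:
    ∧ UStrictTo U (A : Set (H →L[ℂ] H)) e 1 :=
  stmt_11_general U hU A hA e he M hM happrox
end

section
/- Let X be a proper metric space (closed balls compact), A = C₀(X), and U a nonprincipal ultrafilter over ℕ. For a uniformly bounded sequence (f_n) in A with pointwise U-limit f_U(x) = lim_U f_n(x), the following are equivalent: (1) (f_n) is U-equicontinuous on bounded sets; (2) (f_n) is U-strict convergent to f_U, i.e. for every g ∈ C₀(X) and ε > 0 the set {n : ‖f_n g − f_U g‖_∞ < ε} belongs to U. -/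
open Filter Metric
open scoped ZeroAtInfty

/-- A bump function equal to 1 on `closedBall o r` and 0 outside `closedBall o (r+1)`. -/
noncomputable def stmt14Bump {X : Type*} [MetricSpace X] [ProperSpace X] (o : X) (r : ℝ) :
    C₀(X, ℂ) where
  toFun := fun x => ((max 0 (min 1 (r + 1 - dist x o)) : ℝ) : ℂ)
  continuous_toFun := by
    apply Complex.continuous_ofReal.comp
    exact continuous_const.max ((continuous_const.min (continuous_const.sub (continuous_id.dist continuous_const))))
  zero_at_infty' := by
    have h0 : ∀ᶠ x in cocompact X, ((max 0 (min 1 (r + 1 - dist x o)) : ℝ) : ℂ) = 0 := by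
      rw [Filter.eventually_iff, Filter.mem_cocompact]
      refine ⟨closedBall o (r + 1), isCompact_closedBall _ _, fun x hx => ?_⟩
      have : r + 1 - dist x o ≤ 0 := by
        simp only [Set.mem_compl_iff, mem_closedBall, not_le] at hx
        linarith
      simp only [Set.mem_setOf_eq, Complex.ofReal_eq_zero]
      rw [max_eq_left]
      exact le_trans (min_le_right _ _) this
    exact (tendsto_congr' h0).mpr tendsto_const_nhds

lemma stmt14Bump_eq_one {X : Type*} [MetricSpace X] [ProperSpace X] (o : X) (r : ℝ)
    {x : X} (hx : x ∈ closedBall o r) : stmt14Bump o r x = 1 := by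
  have : (1 : ℝ) ≤ r + 1 - dist x o := by
    rw [mem_closedBall] at hx; linarith
  simp only [stmt14Bump, ZeroAtInftyContinuousMap.coe_mk, ContinuousMap.coe_mk]
  rw [min_eq_left this, max_eq_right (by norm_num : (0:ℝ) ≤ 1)]
  norm_num

/-- For a uniformly bounded sequence `(f n)` in `C₀(X)` over a proper metric space,
with pointwise `U`-limit `fU`, `U`-equicontinuity on bounded sets is equivalent to
`U`-strict convergence to `fU`: for every `g ∈ C₀(X)` and `ε > 0` the set of `n`
with `‖f n · g − fU · g‖_∞ ≤ ε` belongs to `U`. -/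
theorem stmt_14 {X : Type*} [MetricSpace X] [ProperSpace X] (o : X)
    (U : Ultrafilter ℕ) (hU : (Filter.cofinite : Filter ℕ) ≤ ↑U)
    (f : ℕ → C₀(X, ℂ)) (M : ℝ) (hM : ∀ n x, ‖f n x‖ ≤ M)
    (fU : X → ℂ) (hfU : ∀ x, Tendsto (fun n => f n x) U (nhds (fU x))) :
    (∀ r > (0 : ℝ), ∀ ε > (0 : ℝ), ∃ δ > (0 : ℝ),
      {n | ∀ s ∈ closedBall o r, ∀ t ∈ closedBall o r,
        dist s t < δ → ‖f n s - f n t‖ < ε} ∈ U)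
    ↔ (∀ g : C₀(X, ℂ), ∀ ε > (0 : ℝ),
        {n | ∀ x : X, ‖f n x * g x - fU x * g x‖ ≤ ε} ∈ U) := by
  rcases isEmpty_or_nonempty X with hX | hX
  · constructor
    · intro _ g ε hε
      exact Filter.univ_mem' fun n x => (IsEmpty.false x).elim
    · intro _ r _ ε _
      exact ⟨1, one_pos, Filter.univ_mem' fun n s hs => ((IsEmpty.false s).elim)⟩
  have hM0 : 0 ≤ M := le_trans (norm_nonneg _) (hM 0 (Classical.arbitrary X))
  have hfUb : ∀ x, ‖fU x‖ ≤ M := fun x =>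
    le_of_tendsto (hfU x).norm (Filter.Eventually.of_forall fun n => hM n x)
  constructor
  · -- equicontinuity → strict convergence
    intro h g ε hε
    set G : ℝ := ‖g.toBCF‖ + 1 with hGdef
    have hG0 : 0 < G := by positivity
    have hG : ∀ x, ‖g x‖ ≤ G := fun x =>
      le_trans (BoundedContinuousFunction.norm_coe_le_norm g.toBCF x) (by linarith)
    set C : ℝ := 2 * M + 1 with hCdef
    have hC : 0 < C := by positivity
    -- find r₀ outside which ‖g‖ is small
    have hgz : Tendsto (fun x => ‖g x‖) (cocompact X) (nhds 0) := by
      simpa using (zero_at_infty g).norm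
    have hsmall : {x | ‖g x‖ ≤ ε / C} ∈ cocompact X := by
      have := hgz.eventually (ge_mem_nhds (show (0:ℝ) < ε / C by positivity))
      filter_upwards [this] with x hx
      simpa using hx
    obtain ⟨K, hKc, hKs⟩ := Filter.mem_cocompact.mp hsmall
    obtain ⟨r₀, hr₀⟩ := hKc.isBounded.subset_closedBall o
    set r : ℝ := max r₀ 1 with hrdef
    have hrpos : (0:ℝ) < r := lt_of_lt_of_le one_pos (le_max_right _ _)
    set ε₁ : ℝ := ε / (3 * G) with hε₁def
    have hε₁ : 0 < ε₁ := by positivity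
    obtain ⟨δ, hδ, hS₀⟩ := h r hrpos ε₁ hε₁
    -- finite subcover of the ball
    have hK2 : IsCompact (closedBall o r) := isCompact_closedBall o r
    obtain ⟨T, hT⟩ := hK2.elim_finite_subcover
      (fun x : closedBall o r => ball (x : X) δ) (fun x => isOpen_ball)
      (fun y hy => Set.mem_iUnion.2 ⟨⟨y, hy⟩, mem_ball_self hδ⟩)
    have hS₁ : ∀ᶠ n in (U : Filter ℕ), ∀ c ∈ T, ‖f n (c : X) - fU (c : X)‖ < ε₁ := by
      rw [eventually_all_finset]
      intro c _
      have hm : ∀ᶠ n in (U : Filter ℕ), f n (c : X) ∈ ball (fU (c : X)) ε₁ :=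
        (hfU (c : X)).eventually_mem (ball_mem_nhds _ hε₁)
      filter_upwards [hm] with n hn
      rw [mem_ball, dist_eq_norm] at hn
      exact hn
    have hfUc : ∀ x ∈ closedBall o r, ∀ c : closedBall o r, x ∈ ball (c : X) δ →
        ‖fU (c : X) - fU x‖ ≤ ε₁ := by
      intro x hx c hxc
      have htd : Tendsto (fun n => f n (c : X) - f n x) U (nhds (fU (c : X) - fU x)) :=
        (hfU _).sub (hfU x)
      refine le_of_tendsto htd.norm ?_
      filter_upwards [hS₀] with n hn
      exact le_of_lt (hn (c : X) c.2 x hx (by rw [mem_ball] at hxc; rwa [dist_comm]))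
    filter_upwards [hS₀, hS₁] with n hn₀ hn₁
    intro x
    have key : ‖f n x * g x - fU x * g x‖ = ‖f n x - fU x‖ * ‖g x‖ := by
      rw [← sub_mul, norm_mul]
    rw [key]
    by_cases hx : x ∈ closedBall o r
    · obtain ⟨c, hcT, hxc⟩ : ∃ c ∈ T, x ∈ ball (c : X) δ := by
        simpa using hT hx
      have h1 : ‖f n x - f n (c : X)‖ < ε₁ :=
        hn₀ x hx (c : X) c.2 (by rwa [mem_ball] at hxc)
      have h2 : ‖f n (c : X) - fU (c : X)‖ < ε₁ := hn₁ c hcT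
      have h3 : ‖fU (c : X) - fU x‖ ≤ ε₁ := hfUc x hx c hxc
      have h4 : ‖f n x - fU x‖ ≤ 3 * ε₁ := by
        have t := dist_triangle4 (f n x) (f n (c : X)) (fU (c : X)) (fU x)
        simp only [dist_eq_norm] at t
        linarith
      have : ‖f n x - fU x‖ * ‖g x‖ ≤ (3 * ε₁) * G :=
        mul_le_mul h4 (hG x) (norm_nonneg _) (by positivity)
      have heq : (3 : ℝ) * ε₁ * G = ε := by
        rw [hε₁def]; field_simp
      linarith
    · have hxK : x ∉ K := fun hxK =>
        hx (closedBall_subset_closedBall (le_max_left _ _) (hr₀ hxK))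
      have hg : ‖g x‖ ≤ ε / C := hKs hxK
      have hf : ‖f n x - fU x‖ ≤ C := by
        have t1 := norm_sub_le (f n x) (fU x)
        have t2 := hM n x
        have t3 := hfUb x
        rw [hCdef]; linarith
      have : ‖f n x - fU x‖ * ‖g x‖ ≤ C * (ε / C) :=
        mul_le_mul hf hg (norm_nonneg _) hC.le
      have heq : C * (ε / C) = ε := by field_simp
      linarith
  · -- strict convergence → equicontinuity
    intro h r hr ε hε
    set g := stmt14Bump o r with hgdef
    have hS : {n | ∀ x, ‖f n x * g x - fU x * g x‖ ≤ ε / 6} ∈ U :=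
      h g (ε / 6) (by positivity)
    have hball : ∀ n, (∀ x, ‖f n x * g x - fU x * g x‖ ≤ ε / 6) →
        ∀ x ∈ closedBall o r, ‖f n x - fU x‖ ≤ ε / 6 := by
      intro n hn x hx
      have := hn x
      rwa [hgdef, stmt14Bump_eq_one o r hx, mul_one, mul_one] at this
    obtain ⟨n₀, hn₀⟩ := Filter.nonempty_of_mem hS
    have huc := (isCompact_closedBall o r).uniformContinuousOn_of_continuous
      (f n₀).continuous.continuousOn
    obtain ⟨δ, hδ, hδ'⟩ := Metric.uniformContinuousOn_iff.mp huc (ε / 6) (by positivity)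
    refine ⟨δ, hδ, ?_⟩
    filter_upwards [hS] with n hn
    intro s hs t ht hst
    have e1 : ‖f n s - fU s‖ ≤ ε / 6 := hball n hn s hs
    have e2 : ‖fU t - f n t‖ ≤ ε / 6 := by
      rw [norm_sub_rev]; exact hball n hn t ht
    have e3 : ‖fU s - f n₀ s‖ ≤ ε / 6 := by
      rw [norm_sub_rev]; exact hball n₀ hn₀ s hs
    have e4 : ‖f n₀ s - f n₀ t‖ < ε / 6 := by
      have := hδ' s hs t ht hst
      rwa [dist_eq_norm] at this
    have e5 : ‖f n₀ t - fU t‖ ≤ ε / 6 := hball n₀ hn₀ t ht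
    have t1 := dist_triangle4 (f n s) (fU s) (f n₀ s) (f n₀ t)
    have t2 := dist_triangle4 (f n₀ t) (fU t) (f n t) (f n t)
    have t3 := dist_triangle (f n s) (f n₀ t) (f n t)
    simp only [dist_eq_norm, sub_self, norm_zero] at t1 t2 t3
    linarith
end

section
/- Let A and B be C*-algebras, each represented faithfully and nondegenerately, and let φ : A → B be a surjective *-homomorphism. Let U be a cofinal ultrafilter over an index set supporting approximate units for both. Then the induced map φ' : A^U → B^U on norm ultrapowers, φ'((a_i)) = (φ(a_i)), maps A^{sU} into B^{sU}. -/
open Filter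

local notation "⟪" x ", " y "⟫" => @inner ℂ _ _ x y

private lemma ulim_complex {I : Type*} (U : Ultrafilter I) (f : I → ℂ) (C : ℝ)
    (hf : ∀ i, ‖f i‖ ≤ C) : ∃ c : ℂ, ‖c‖ ≤ C ∧ Filter.Tendsto f U (nhds c) := by
  have hmem : Metric.closedBall (0 : ℂ) C ∈ Ultrafilter.map f U := by
    refine Filter.mem_map.mpr (Filter.univ_mem' fun i => ?_)
    simpa [Metric.mem_closedBall, dist_zero_right] using hf i
  obtain ⟨c, hc, hle⟩ := (isCompact_closedBall (0 : ℂ) C).ultrafilter_le_nhds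
    (Ultrafilter.map f U) (Filter.le_principal_iff.mpr hmem)
  refine ⟨c, by simpa [Metric.mem_closedBall, dist_zero_right] using hc, ?_⟩
  rwa [Filter.Tendsto, ← Ultrafilter.coe_map]

private lemma exists_wot_ulim {I K : Type*} [NormedAddCommGroup K] [InnerProductSpace ℂ K]
    [CompleteSpace K] (U : Ultrafilter I) (g : I → K →L[ℂ] K) (M : ℝ) (hM : 0 ≤ M)
    (hg : ∀ i, ‖g i‖ ≤ M) :
    ∃ S : K →L[ℂ] K, ∀ ξ w : K, Filter.Tendsto (fun i => ⟪g i ξ, w⟫) U (nhds ⟪S ξ, w⟫) := by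
  have key : ∀ ξ w : K, ∃ c : ℂ, ‖c‖ ≤ M * ‖ξ‖ * ‖w‖ ∧
      Tendsto (fun i => ⟪g i ξ, w⟫) ↑U (nhds c) := by
    intro ξ w
    refine ulim_complex U _ _ fun i => ?_
    calc ‖⟪g i ξ, w⟫‖ ≤ ‖g i ξ‖ * ‖w‖ := norm_inner_le_norm _ _
      _ ≤ M * ‖ξ‖ * ‖w‖ := by
          have h1 : ‖g i ξ‖ ≤ M * ‖ξ‖ :=
            ((g i).le_opNorm ξ).trans (mul_le_mul_of_nonneg_right (hg i) (norm_nonneg ξ))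
          exact mul_le_mul_of_nonneg_right h1 (norm_nonneg w)
  choose p hpb hpt using key
  have hadd_w : ∀ ξ w w', p ξ (w + w') = p ξ w + p ξ w' := fun ξ w w' =>
    tendsto_nhds_unique (hpt ξ (w + w'))
      (by simpa [inner_add_right] using (hpt ξ w).add (hpt ξ w'))
  have hsmul_w : ∀ ξ (c : ℂ) w, p ξ (c • w) = c * p ξ w := fun ξ c w =>
    tendsto_nhds_unique (hpt ξ (c • w))
      (by simpa [inner_smul_right] using (hpt ξ w).const_mul c)
  let F : K → K →L[ℂ] ℂ := fun ξ => LinearMap.mkContinuous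
    { toFun := fun w => p ξ w, map_add' := hadd_w ξ, map_smul' := fun c w => hsmul_w ξ c w }
    (M * ‖ξ‖) (fun w => hpb ξ w)
  let v : K → K := fun ξ => (InnerProductSpace.toDual ℂ K).symm (F ξ)
  have hv : ∀ ξ w, ⟪v ξ, w⟫ = p ξ w := fun ξ w => InnerProductSpace.toDual_symm_apply
  have hvt : ∀ ξ w, Tendsto (fun i => ⟪g i ξ, w⟫) ↑U (nhds ⟪v ξ, w⟫) := fun ξ w =>
    (hv ξ w).symm ▸ hpt ξ w
  have hvadd : ∀ ξ ξ', v (ξ + ξ') = v ξ + v ξ' := by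
    intro ξ ξ'
    refine ext_inner_right ℂ fun w => ?_
    rw [inner_add_left]
    refine tendsto_nhds_unique (hvt (ξ + ξ') w) ?_
    simpa [map_add, inner_add_left] using (hvt ξ w).add (hvt ξ' w)
  have hvsmul : ∀ (c : ℂ) ξ, v (c • ξ) = c • v ξ := by
    intro c ξ
    refine ext_inner_right ℂ fun w => ?_
    rw [inner_smul_left]
    refine tendsto_nhds_unique (hvt (c • ξ) w) ?_
    simpa [map_smul, inner_smul_left, mul_comm] using (hvt ξ w).const_mul (starRingEnd ℂ c)
  have hvb : ∀ ξ, ‖v ξ‖ ≤ M * ‖ξ‖ := by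
    intro ξ
    have h1 : ‖v ξ‖ = ‖F ξ‖ := LinearIsometryEquiv.norm_map _ _
    rw [h1]
    exact LinearMap.mkContinuous_norm_le _ (mul_nonneg hM (norm_nonneg ξ)) _
  refine ⟨LinearMap.mkContinuous
    { toFun := v, map_add' := hvadd, map_smul' := fun c ξ => hvsmul c ξ } M hvb,
    fun ξ w => ?_⟩
  exact hvt ξ w

set_option maxHeartbeats 1000000 in
/-- A surjective `*`-homomorphism `φ : A → B` maps `A^{sU}` into `B^{sU}`:
the induced map on bounded families carries `U`-strict convergent families to
`U`-strict convergent families. -/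
theorem stmt_15 {I : Type*} [SemilatticeSup I] [Nonempty I]
    {H K : Type*} [NormedAddCommGroup H] [InnerProductSpace ℂ H] [CompleteSpace H]
    [NormedAddCommGroup K] [InnerProductSpace ℂ K] [CompleteSpace K]
    (U : Ultrafilter I) (hU : ∀ i₀ : I, {i | i₀ ≤ i} ∈ U)
    (A : NonUnitalStarSubalgebra ℂ (H →L[ℂ] H)) (hA : IsClosed (A : Set (H →L[ℂ] H)))
    (B : NonUnitalStarSubalgebra ℂ (K →L[ℂ] K)) (hB : IsClosed (B : Set (K →L[ℂ] K)))
    (φ : A →⋆ₙₐ[ℂ] B) (hφ : Function.Surjective φ)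
    -- approximate units for A and B indexed by the same directed set:
    (eA : I → A) (MA : ℝ) (hMA : ∀ i, ‖(eA i : H →L[ℂ] H)‖ ≤ MA)
    (happroxA : ∀ x ∈ A, Tendsto (fun i => ‖x * (eA i : H →L[ℂ] H) - x‖) atTop (nhds 0)
        ∧ Tendsto (fun i => ‖(eA i : H →L[ℂ] H) * x - x‖) atTop (nhds 0))
    (eB : I → B) (MB : ℝ) (hMB : ∀ i, ‖(eB i : K →L[ℂ] K)‖ ≤ MB)
    (happroxB : ∀ y ∈ B, Tendsto (fun i => ‖y * (eB i : K →L[ℂ] K) - y‖) atTop (nhds 0)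
        ∧ Tendsto (fun i => ‖(eB i : K →L[ℂ] K) * y - y‖) atTop (nhds 0))
    (a : I → A) (M : ℝ) (hM : ∀ i, ‖(a i : H →L[ℂ] H)‖ ≤ M)
    (T : H →L[ℂ] H)
    (hT : UStrictTo U (A : Set (H →L[ℂ] H)) (fun i => (a i : H →L[ℂ] H)) T) :
    ∃ S : K →L[ℂ] K,
      UStrictTo U (B : Set (K →L[ℂ] K)) (fun i => (φ (a i) : K →L[ℂ] K)) S := by
  classical
  haveI : IsClosed (A : Set (H →L[ℂ] H)) := hA
  haveI : IsClosed (B : Set (K →L[ℂ] K)) := hB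
  have hb : ∀ i, ‖(φ (a i) : K →L[ℂ] K)‖ ≤ max M 0 := by
    intro i
    calc ‖(φ (a i) : K →L[ℂ] K)‖ = ‖φ (a i)‖ := rfl
      _ ≤ ‖a i‖ := NonUnitalStarAlgHom.norm_apply_le φ (a i)
      _ = ‖(a i : H →L[ℂ] H)‖ := rfl
      _ ≤ M := hM i
      _ ≤ max M 0 := le_max_left _ _
  obtain ⟨S, hS⟩ := exists_wot_ulim U (fun i => (φ (a i) : K →L[ℂ] K)) (max M 0)
    (le_max_right _ _) hb
  refine ⟨S, ?_⟩
  intro x hx ε hε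
  obtain ⟨y, hy⟩ := hφ ⟨x, hx⟩
  have hφc : Continuous φ :=
    AddMonoidHomClass.continuous_of_bound φ 1
      (fun z => by simpa using NonUnitalStarAlgHom.norm_apply_le φ z)
  -- left limit in B(H)
  have hleft0 : Tendsto (fun i => ((a i : H →L[ℂ] H) * (y : H →L[ℂ] H))) ↑U
      (nhds (T * (y : H →L[ℂ] H))) := by
    rw [Metric.tendsto_nhds]
    intro δ hδ
    filter_upwards [hT (y : H →L[ℂ] H) y.2 δ hδ] with i hi
    rw [dist_eq_norm]; exact hi.1
  have hright0 : Tendsto (fun i => ((y : H →L[ℂ] H) * (a i : H →L[ℂ] H))) ↑U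
      (nhds ((y : H →L[ℂ] H) * T)) := by
    rw [Metric.tendsto_nhds]
    intro δ hδ
    filter_upwards [hT (y : H →L[ℂ] H) y.2 δ hδ] with i hi
    rw [dist_eq_norm]; exact hi.2
  have hTy : T * (y : H →L[ℂ] H) ∈ A :=
    hA.mem_of_tendsto hleft0 (Filter.Eventually.of_forall fun i => mul_mem (a i).2 y.2)
  have hyT : (y : H →L[ℂ] H) * T ∈ A :=
    hA.mem_of_tendsto hright0 (Filter.Eventually.of_forall fun i => mul_mem y.2 (a i).2)
  -- tendsto in B(K)
  have hleft : Tendsto (fun i => ((φ (a i) : K →L[ℂ] K) * x)) ↑U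
      (nhds ((φ ⟨T * (y : H →L[ℂ] H), hTy⟩ : B) : K →L[ℂ] K)) := by
    have h2 : Tendsto (fun i => a i * y) ↑U (nhds (⟨T * (y : H →L[ℂ] H), hTy⟩ : A)) := by
      rw [tendsto_subtype_rng]
      simpa using hleft0
    have h4 := (continuous_subtype_val.tendsto _).comp ((hφc.tendsto _).comp h2)
    refine h4.congr fun i => ?_
    show ((φ (a i * y) : B) : K →L[ℂ] K) = (φ (a i) : K →L[ℂ] K) * x
    rw [map_mul, hy]
    rfl
  have hright : Tendsto (fun i => (x * (φ (a i) : K →L[ℂ] K))) ↑U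
      (nhds ((φ ⟨(y : H →L[ℂ] H) * T, hyT⟩ : B) : K →L[ℂ] K)) := by
    have h2 : Tendsto (fun i => y * a i) ↑U (nhds (⟨(y : H →L[ℂ] H) * T, hyT⟩ : A)) := by
      rw [tendsto_subtype_rng]
      simpa using hright0
    have h4 := (continuous_subtype_val.tendsto _).comp ((hφc.tendsto _).comp h2)
    refine h4.congr fun i => ?_
    show ((φ (y * a i) : B) : K →L[ℂ] K) = x * (φ (a i) : K →L[ℂ] K)
    rw [map_mul, hy]
    rfl
  -- identify the strict limits via the WOT characterization of S
  have hSx : S * x = ((φ ⟨T * (y : H →L[ℂ] H), hTy⟩ : B) : K →L[ℂ] K) := by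
    refine ContinuousLinearMap.ext fun ξ => ext_inner_right ℂ fun w => ?_
    have e1 : Tendsto (fun i => ⟪(φ (a i) : K →L[ℂ] K) (x ξ), w⟫) ↑U
        (nhds ⟪S (x ξ), w⟫) := hS (x ξ) w
    have e2 : Tendsto (fun i => ((φ (a i) : K →L[ℂ] K) * x) ξ) ↑U
        (nhds (((φ ⟨T * (y : H →L[ℂ] H), hTy⟩ : B) : K →L[ℂ] K) ξ)) :=
      ((ContinuousLinearMap.apply ℂ K ξ).continuous.tendsto _).comp hleft
    have e3 := Filter.Tendsto.inner (𝕜 := ℂ) e2 (tendsto_const_nhds (x := w))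
    exact tendsto_nhds_unique e1 e3
  have hxS : x * S = ((φ ⟨(y : H →L[ℂ] H) * T, hyT⟩ : B) : K →L[ℂ] K) := by
    refine ContinuousLinearMap.ext fun ξ => ext_inner_right ℂ fun w => ?_
    have e1 := hS ξ (ContinuousLinearMap.adjoint x w)
    have e2 : Tendsto (fun i => ⟪(φ (a i) : K →L[ℂ] K) ξ, ContinuousLinearMap.adjoint x w⟫) ↑U
        (nhds ⟪((φ ⟨(y : H →L[ℂ] H) * T, hyT⟩ : B) : K →L[ℂ] K) ξ, w⟫) := by
      have e0 := Filter.Tendsto.inner (𝕜 := ℂ)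
        (((ContinuousLinearMap.apply ℂ K ξ).continuous.tendsto _).comp hright)
        (tendsto_const_nhds (x := w))
      refine e0.congr fun i => ?_
      rw [ContinuousLinearMap.adjoint_inner_right]
      rfl
    have key := tendsto_nhds_unique e1 e2
    calc ⟪(x * S) ξ, w⟫ = ⟪S ξ, ContinuousLinearMap.adjoint x w⟫ := by
          rw [ContinuousLinearMap.adjoint_inner_right]; rfl
      _ = _ := key
  have l1 : ∀ᶠ i in ↑U, ‖(φ (a i) : K →L[ℂ] K) * x - S * x‖ < ε := by
    rw [hSx]
    filter_upwards [Metric.tendsto_nhds.mp hleft ε hε] with i hi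
    rwa [dist_eq_norm] at hi
  have l2 : ∀ᶠ i in ↑U, ‖x * (φ (a i) : K →L[ℂ] K) - x * S‖ < ε := by
    rw [hxS]
    filter_upwards [Metric.tendsto_nhds.mp hright ε hε] with i hi
    rwa [dist_eq_norm] at hi
  exact l1.and l2
end

section
/- Let Γ be a countable group acting transitively on a locally finite tree T with base vertex o, and let Λ = Stab(o) be boundary amenable with witnessing compact Γ-space Y and sequence (S_i) ⊆ C_c(Λ, C(Y)). Fix a cross-section (g_v)_{v∈T} with g_v o = v, and define T_i : Γ → C_b(T × Y) by T_i(γ)(t,y) = |[o,t] ∩ B(i)|^{-1/2} · Σ_{v ∈ B(i)} χ_{[o,t]}(v) S_{κ(i)}(g_v^{-1} γ)(g_v^{-1} y), where B(i) is the ball of radius i around o and κ(i) is suitably chosen. Then T_i is positive, finitely supported, and satisfies Σ_{γ∈Γ} T_i(γ)² = 1 identically on T × Y. -/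
open Filter
open scoped BigOperators

open scoped Classical in
private lemma tree_ball_finite {V : Type*} (G : SimpleGraph V) (hc : G.Connected)
    (hlf : ∀ v : V, (G.neighborSet v).Finite) (o : V) :
    ∀ n : ℕ, {v : V | G.dist o v ≤ n}.Finite := by
  intro n
  induction n with
  | zero =>
    have : {v : V | G.dist o v ≤ 0} ⊆ {o} := by
      intro v hv
      simp only [Set.mem_setOf_eq, Nat.le_zero] at hv
      have := ((hc o v).dist_eq_zero_iff).mp hv
      simp [this.symm]
    exact Set.Finite.subset (Set.finite_singleton o) this
  | succ n ih =>
    have hsub : {v : V | G.dist o v ≤ n + 1} ⊆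
        {v : V | G.dist o v ≤ n} ∪ ⋃ u ∈ {v : V | G.dist o v ≤ n}, G.neighborSet u := by
      intro v hv
      simp only [Set.mem_setOf_eq] at hv
      obtain ⟨p, hp⟩ := (hc o v).exists_walk_length_eq_dist
      have hlen : p.reverse.length ≤ n + 1 := by
        rw [SimpleGraph.Walk.length_reverse, hp]; exact hv
      cases hq : p.reverse with
      | nil => left; simp [Set.mem_setOf_eq, SimpleGraph.dist_self]
      | cons h q =>
        right
        rename_i u
        have hqlen : q.length ≤ n := by
          rw [hq] at hlen
          simpa using Nat.lt_succ_iff.mp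
            (Nat.lt_of_lt_of_le (Nat.lt_succ_of_le le_rfl)
              (by simpa [SimpleGraph.Walk.length_cons] using hlen))
        have hu : G.dist o u ≤ n :=
          le_trans (by simpa using SimpleGraph.dist_le q.reverse) hqlen
        exact Set.mem_biUnion hu h.symm
    exact Set.Finite.subset (ih.union (Set.Finite.biUnion ih (fun u _ => hlf u))) hsub

section Aux

variable {Γ V Y : Type*} [Group Γ] [MulAction Γ V] [TopologicalSpace Y] [MulAction Γ Y]
variable {o : V} {g : V → Γ} {S : Γ → C(Y, ℝ)}

open scoped Classical in
private lemma collapse_lemma (hg : ∀ v, g v • o = v) (hSsupp : ∀ γ : Γ, S γ ≠ 0 → γ • o = o)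
    {P : Set V} (hP : P.Finite) (γ : Γ) (y : Y) :
    ∑ᶠ v ∈ P, S ((g v)⁻¹ * γ) ((g v)⁻¹ • y)
      = if γ • o ∈ P then S ((g (γ • o))⁻¹ * γ) ((g (γ • o))⁻¹ • y) else 0 := by
  have key : ∀ v : V, S ((g v)⁻¹ * γ) ≠ 0 → v = γ • o := by
    intro v h
    have h2 := hSsupp _ h
    rw [mul_smul] at h2
    have h3 := (inv_smul_eq_iff).mp h2
    rw [hg] at h3
    exact h3.symm
  rw [← hP.coe_toFinset, finsum_mem_coe_finset]
  have step : ∀ v ∈ hP.toFinset, S ((g v)⁻¹ * γ) ((g v)⁻¹ • y)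
      = if γ • o = v then S ((g (γ • o))⁻¹ * γ) ((g (γ • o))⁻¹ • y) else 0 := by
    intro v hv
    by_cases hcase : γ • o = v
    · subst hcase; simp
    · rw [if_neg hcase]
      by_cases h0 : S ((g v)⁻¹ * γ) = 0
      · rw [h0]; simp
      · exact absurd (key v h0).symm hcase
  rw [Finset.sum_congr rfl step, Finset.sum_ite_eq]
  simp [hP.mem_toFinset]

open scoped Classical in
private lemma sum_lemma (hg : ∀ v, g v • o = v) (hSsupp : ∀ γ : Γ, S γ ≠ 0 → γ • o = o)
    (hSfin : (Function.support S).Finite) (hSsum : ∀ y : Y, ∑ᶠ γ : Γ, (S γ y) ^ 2 = 1)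
    {P : Set V} (hP : P.Finite) (y : Y) :
    ∑ᶠ γ : Γ, (∑ᶠ v ∈ P, S ((g v)⁻¹ * γ) ((g v)⁻¹ • y)) ^ 2 = (P.ncard : ℝ) := by
  set F : V → Γ → ℝ :=
    fun v γ => if γ • o = v then (S ((g v)⁻¹ * γ) ((g v)⁻¹ • y)) ^ 2 else 0 with hF
  have hFsupp : ∀ v ∈ hP.toFinset, (Function.support (F v)).Finite := by
    intro v _
    apply (hSfin.image (fun lam => g v * lam)).subset
    intro γ hγ
    have h0 : S ((g v)⁻¹ * γ) ≠ 0 := by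
      intro h
      apply hγ
      simp [hF, h]
    exact ⟨(g v)⁻¹ * γ, h0, by group⟩
  have hpt : ∀ γ : Γ, (∑ᶠ v ∈ P, S ((g v)⁻¹ * γ) ((g v)⁻¹ • y)) ^ 2
      = ∑ v ∈ hP.toFinset, F v γ := by
    intro γ
    rw [collapse_lemma hg hSsupp hP γ y]
    have hsum : ∑ v ∈ hP.toFinset, F v γ
        = if γ • o ∈ hP.toFinset
          then (S ((g (γ • o))⁻¹ * γ) ((g (γ • o))⁻¹ • y)) ^ 2 else 0 := by
      refine (Finset.sum_congr rfl ?_).trans (Finset.sum_ite_eq hP.toFinset (γ • o)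
        (fun _ => (S ((g (γ • o))⁻¹ * γ)) ((g (γ • o))⁻¹ • y) ^ 2))
      intro v hv
      rw [hF]
      by_cases h : γ • o = v
      · subst h; simp
      · simp [h]
    rw [hsum]
    by_cases h : γ • o ∈ P
    · rw [if_pos h, if_pos (hP.mem_toFinset.2 h)]
    · rw [if_neg h, if_neg (fun hc => h (hP.mem_toFinset.1 hc))]
      ring
  rw [finsum_congr hpt, ← sum_finsum_comm _ _ hFsupp]
  have hone : ∀ v ∈ hP.toFinset, ∑ᶠ γ : Γ, F v γ = 1 := by
    intro v _
    rw [← finsum_comp_equiv (Equiv.mulLeft (g v)) (f := F v)]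
    have heq : ∀ lam : Γ, F v ((Equiv.mulLeft (g v)) lam) = (S lam ((g v)⁻¹ • y)) ^ 2 := by
      intro lam
      simp only [Equiv.coe_mulLeft, hF, inv_mul_cancel_left]
      by_cases hl : lam • o = o
      · rw [if_pos]
        rw [mul_smul, hl, hg]
      · rw [if_neg]
        · have hz : S lam = 0 := by
            by_contra h
            exact hl (hSsupp _ h)
          rw [hz]
          simp
        · intro hc
          rw [mul_smul] at hc
          apply hl
          have : g v • lam • o = g v • o := by rw [hc, hg]
          exact smul_left_cancel _ this
    rw [finsum_congr heq, hSsum]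
  rw [Finset.sum_congr rfl hone, Finset.sum_const, Set.ncard_eq_toFinset_card _ hP]
  simp

end Aux

/-- The construction of the Følner-type functions `T_i` for a group acting
transitively on a locally finite tree: given `S = S_{κ(i)}` supported on the
stabilizer `Λ` of the base vertex `o`, positive, with `∑_λ S(λ)² = 1`, the
function
`T_i(γ)(t,y) = |[o,t] ∩ B(i)|^{-1/2} ∑_{v ∈ [o,t] ∩ B(i)} S(g_v⁻¹γ)(g_v⁻¹ y)`
is positive, finitely supported, and satisfies `∑_γ T_i(γ)² = 1` on `T × Y`.
Here a vertex `v` lies on the geodesic `[o,t]` iff `d(o,v) + d(v,t) = d(o,t)`,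
and `B(i)` is the ball of radius `i` around `o`. -/
theorem stmt_18 {Γ V Y : Type*} [Group Γ] [Countable Γ] [MulAction Γ V]
    [TopologicalSpace Y] [CompactSpace Y] [MulAction Γ Y]
    (G : SimpleGraph V) (hT : G.IsTree) (hlf : ∀ v : V, (G.neighborSet v).Finite)
    (hadj : ∀ (g : Γ) (u v : V), G.Adj u v → G.Adj (g • u) (g • v))
    (htrans : ∀ u v : V, ∃ g : Γ, g • u = v)
    (o : V) (g : V → Γ) (hg : ∀ v, g v • o = v)
    (S : Γ → C(Y, ℝ))
    (hSsupp : ∀ γ : Γ, S γ ≠ 0 → γ • o = o)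
    (hSfin : (Function.support S).Finite)
    (hSpos : ∀ γ y, 0 ≤ S γ y)
    (hSsum : ∀ y : Y, ∑ᶠ γ : Γ, (S γ y) ^ 2 = 1)
    (i : ℕ)
    (T : Γ → V → Y → ℝ)
    (hTdef : ∀ γ t y, T γ t y =
      (Real.sqrt ((Set.ncard {v : V | G.dist o v + G.dist v t = G.dist o t
          ∧ G.dist o v ≤ i} : ℕ) : ℝ))⁻¹ *
        ∑ᶠ v ∈ {v : V | G.dist o v + G.dist v t = G.dist o t ∧ G.dist o v ≤ i},
          S ((g v)⁻¹ * γ) ((g v)⁻¹ • y)) :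
    (∀ γ t y, 0 ≤ T γ t y)
    ∧ ({γ : Γ | ∃ t y, T γ t y ≠ 0}.Finite)
    ∧ (∀ t y, ∑ᶠ γ : Γ, (T γ t y) ^ 2 = 1) := by
  classical
  have hball : {v : V | G.dist o v ≤ i}.Finite :=
    tree_ball_finite G hT.isConnected hlf o i
  have hPfin : ∀ t : V,
      {v : V | G.dist o v + G.dist v t = G.dist o t ∧ G.dist o v ≤ i}.Finite :=
    fun t => hball.subset (fun v hv => hv.2)
  have hPo : ∀ t : V,
      o ∈ {v : V | G.dist o v + G.dist v t = G.dist o t ∧ G.dist o v ≤ i} := by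
    intro t
    constructor
    · rw [SimpleGraph.dist_self, zero_add]
    · rw [SimpleGraph.dist_self]; exact Nat.zero_le i
  refine ⟨?_, ?_, ?_⟩
  · -- positivity
    intro γ t y
    rw [hTdef γ t y, collapse_lemma hg hSsupp (hPfin t) γ y]
    apply mul_nonneg (inv_nonneg.2 (Real.sqrt_nonneg _))
    split_ifs
    · exact hSpos _ _
    · exact le_refl 0
  · -- finite support
    apply Set.Finite.subset ((hball.prod hSfin).image (fun p => g p.1 * p.2))
    intro γ hγ
    obtain ⟨t, y, hne⟩ := hγ
    rw [hTdef γ t y, collapse_lemma hg hSsupp (hPfin t) γ y] at hne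
    split_ifs at hne with hmem
    · have h2 := right_ne_zero_of_mul hne
      have h3 : S ((g (γ • o))⁻¹ * γ) ≠ 0 := by
        intro h
        rw [h] at h2
        simp at h2
      exact ⟨(γ • o, (g (γ • o))⁻¹ * γ), ⟨hmem.2, h3⟩, by group⟩
    · simp at hne
  · -- sum equals one
    intro t y
    set c : ℝ := Real.sqrt ((Set.ncard {v : V | G.dist o v + G.dist v t = G.dist o t
        ∧ G.dist o v ≤ i} : ℕ) : ℝ) with hc
    have hfin2 : (Function.support (fun γ : Γ =>
        (∑ᶠ v ∈ {v : V | G.dist o v + G.dist v t = G.dist o t ∧ G.dist o v ≤ i},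
          S ((g v)⁻¹ * γ) ((g v)⁻¹ • y)) ^ 2)).Finite := by
      apply Set.Finite.subset (((hPfin t).prod hSfin).image (fun p => g p.1 * p.2))
      intro γ hγ
      rw [Function.mem_support] at hγ
      rw [collapse_lemma hg hSsupp (hPfin t) γ y] at hγ
      split_ifs at hγ with hmem
      · have h3 : S ((g (γ • o))⁻¹ * γ) ≠ 0 := by
          intro h
          rw [h] at hγ
          simp at hγ
        exact ⟨(γ • o, (g (γ • o))⁻¹ * γ), ⟨hmem, h3⟩, by group⟩
      · simp at hγ
    have step1 : ∑ᶠ γ : Γ, (T γ t y) ^ 2 = (c⁻¹) ^ 2 *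
        ∑ᶠ γ : Γ, (∑ᶠ v ∈ {v : V | G.dist o v + G.dist v t = G.dist o t ∧ G.dist o v ≤ i},
          S ((g v)⁻¹ * γ) ((g v)⁻¹ • y)) ^ 2 := by
      rw [mul_finsum _ _]
      apply finsum_congr
      intro γ
      rw [hTdef γ t y, ← hc]
      ring
    rw [step1, sum_lemma hg hSsupp hSfin hSsum (hPfin t) y]
    have hcard : (0 : ℝ) < ((Set.ncard {v : V | G.dist o v + G.dist v t = G.dist o t
        ∧ G.dist o v ≤ i} : ℕ) : ℝ) := by
      have : 0 < Set.ncard {v : V | G.dist o v + G.dist v t = G.dist o t ∧ G.dist o v ≤ i} :=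
        (Set.ncard_pos (hPfin t)).2 ⟨o, hPo t⟩
      exact_mod_cast this
    rw [hc, inv_pow, Real.sq_sqrt hcard.le, inv_mul_cancel₀ hcard.ne']
end
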